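/- arXiv:1306.2108 — 5 statements merged into one kernel-verified Lean document; each statement's English description precedes it below -/
import Mathlib

section
/- For every complex number s with Re(s) > 2, the Mellin transform ∫₀^∞ ( −∑_{n≥1} φ(n) · log(1 − e^{−tn}) ) · t^{s−1} dt equals ζ(s+1) · ζ(s−1) · Γ(s) / ζ(s), where ζ is the Riemann zeta function and Γ the Gamma function. -/
open MeasureTheory Complex

/-! Expanding `-log (1 - x) = ∑ₖ xᵏ / k` turns `log S(e^{-t})` into the double series
`∑_{n,k} φ(n) k⁻¹ e^{-nkt}`, which may be integrated termwise against `t^{s-1}`: this gives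
`Γ(s) ∑_{n,k} φ(n) n^{-s} k^{-s-1} = Γ(s) L(φ, s) ζ(s+1)`, and `φ ⍟ 1 = id` gives
`L(φ, s) = ζ(s-1) / ζ(s)`. -/

open scoped LSeries.notation

lemma LSeries.term_natCast_mul (f : ℕ → ℂ) (s : ℂ) (n : ℕ) :
    term (fun n ↦ n * f n) s n = term f (s - 1) n := by
  rcases eq_or_ne n 0 with rfl | hn
  · simp
  have hn' : (n : ℂ) ≠ 0 := Nat.cast_ne_zero.mpr hn
  rw [term_of_ne_zero hn, term_of_ne_zero hn, cpow_sub _ _ hn', cpow_one, div_div_eq_mul_div,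
    mul_comm]

lemma LSeries_natCast_mul (f : ℕ → ℂ) (s : ℂ) : L (fun n ↦ n * f n) s = L f (s - 1) := by
  simp only [LSeries, LSeries.term_natCast_mul]

lemma LSeries_natCast {s : ℂ} (hs : 2 < s.re) : L (fun n ↦ (n : ℂ)) s = riemannZeta (s - 1) := by
  simpa using (LSeries_natCast_mul 1 s).trans
    (LSeries_one_eq_riemannZeta (s := s - 1) (by simp; linarith))

lemma LSeriesSummable_totient {s : ℂ} (hs : 2 < s.re) :
    LSeriesSummable (fun n ↦ (n.totient : ℂ)) s :=
  LSeriesSummable_of_le_const_mul_rpow hs ⟨1, fun n _ ↦ by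
    norm_num
    exact Nat.totient_le n⟩

lemma LSeries.convolution_totient_one : (fun n ↦ (n.totient : ℂ)) ⍟ 1 = fun n : ℕ ↦ (n : ℂ) := by
  ext n
  simp only [convolution_def, Pi.one_apply, mul_one]
  rw [Nat.sum_divisorsAntidiagonal (fun d _ ↦ (d.totient : ℂ)), ← Nat.cast_sum, Nat.sum_totient]

lemma LSeries_totient {s : ℂ} (hs : 2 < s.re) :
    L (fun n ↦ (n.totient : ℂ)) s = riemannZeta (s - 1) / riemannZeta s := by
  have hs1 : 1 < s.re := by linarith
  have h := LSeries_convolution' (LSeriesSummable_totient hs) (LSeriesSummable_one_iff.mpr hs1)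
  rw [LSeries.convolution_totient_one, LSeries_natCast hs, LSeries_one_eq_riemannZeta hs1] at h
  rw [h, mul_div_cancel_right₀ _ (riemannZeta_ne_zero_of_one_lt_re hs1)]

open Filter Asymptotics in
lemma LSeriesSummable.summable_norm_mul_exp_neg_mul {f : ℕ → ℂ} {s : ℂ} (hf : LSeriesSummable f s)
    {t : ℝ} (ht : 0 < t) : Summable fun n : ℕ ↦ ‖f n‖ * Real.exp (-(t * n)) := by
  have hbdd : (fun n : ℕ ↦ (n : ℝ) ^ s.re * Real.exp (-t * n)) =O[atTop] fun _ ↦ (1 : ℝ) :=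
    ((tendsto_rpow_mul_exp_neg_mul_atTop_nhds_zero s.re t ht).comp
      tendsto_natCast_atTop_atTop).isBigO_one ℝ
  refine summable_of_isBigO_nat hf.norm
    (((isBigO_refl (fun n ↦ ‖LSeries.term f s n‖) atTop).mul hbdd).congr' ?_
      (.of_forall fun _ ↦ mul_one _))
  filter_upwards [eventually_ne_atTop 0] with n hn
  have hpos : (0 : ℝ) < (n : ℝ) ^ s.re := by positivity
  simp only [LSeries.norm_term_eq, if_neg hn, neg_mul]
  field_simp

lemma hasSum_exp_neg_mul_succ_div {x : ℝ} (hx : 0 < x) :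
    HasSum (fun k : ℕ ↦ Real.exp (-(x * (k + 1))) / (k + 1)) (-Real.log (1 - Real.exp (-x))) := by
  have h := Real.hasSum_pow_div_log_of_abs_lt_one (x := Real.exp (-x))
    (by rw [abs_of_pos (Real.exp_pos _)]; exact Real.exp_lt_one_iff.mpr (by linarith))
  refine h.congr_fun fun k ↦ ?_
  rw [← Real.exp_nat_mul]
  push_cast
  ring_nf

lemma hasSum_neg_tsum_mul_log_one_sub_exp {a : ℕ → ℝ} {t : ℝ} (ht : 0 < t)
    (ha : Summable fun n : ℕ ↦ ‖a n‖ * Real.exp (-(t * n))) :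
    HasSum (fun q : ℕ × ℕ ↦ a (q.1 + 1) / (q.2 + 1) * Real.exp (-((q.1 + 1) * (q.2 + 1)) * t))
      (-∑' n : ℕ, a (n + 1) * Real.log (1 - Real.exp (-(t * (n + 1))))) := by
  have hsummable : Summable fun q : ℕ × ℕ ↦
      a (q.1 + 1) / (q.2 + 1) * Real.exp (-((q.1 + 1) * (q.2 + 1)) * t) := by
    have hgeom : Summable fun k : ℕ ↦ Real.exp (-(t * k)) := by
      simpa [mul_comm] using Real.summable_exp_nat_mul_iff.mpr (neg_neg_of_pos ht)
    refine .of_norm_bounded (((summable_nat_add_iff 1).mpr ha).mul_of_nonneg hgeom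
      (fun _ ↦ by positivity) (fun _ ↦ by positivity)) fun ⟨n, k⟩ ↦ ?_
    -- `(n + 1) * (k + 1) ≥ (n + 1) + k`
    have hexp : Real.exp (-((n + 1) * (k + 1)) * t) ≤
        Real.exp (-(t * (n + 1 : ℕ))) * Real.exp (-(t * k)) := by
      rw [← Real.exp_add, Real.exp_le_exp]
      push_cast
      nlinarith [mul_nonneg (Nat.cast_nonneg (α := ℝ) n) (Nat.cast_nonneg (α := ℝ) k)]
    have hk : (1 : ℝ) ≤ k + 1 := by simp
    calc ‖a (n + 1) / (k + 1) * Real.exp (-((n + 1) * (k + 1)) * t)‖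
        = ‖a (n + 1)‖ / (k + 1) * Real.exp (-((n + 1) * (k + 1)) * t) := by
          rw [norm_mul, norm_div, Real.norm_of_nonneg (Real.exp_pos _).le,
            Real.norm_of_nonneg (by positivity : (0 : ℝ) ≤ k + 1)]
      _ ≤ ‖a (n + 1)‖ * (Real.exp (-(t * (n + 1 : ℕ))) * Real.exp (-(t * k))) := by
          gcongr
          exact div_le_self (norm_nonneg _) hk
      _ = _ := (mul_assoc ..).symm
  have hfiber (n : ℕ) :
      HasSum (fun k : ℕ ↦ a (n + 1) / (k + 1) * Real.exp (-((n + 1) * (k + 1)) * t))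
        (-(a (n + 1) * Real.log (1 - Real.exp (-(t * (n + 1)))))) := by
    rw [neg_mul_eq_mul_neg]
    refine ((hasSum_exp_neg_mul_succ_div (by positivity)).mul_left (a (n + 1))).congr_fun
      fun k ↦ ?_
    ring_nf
  rw [← tsum_neg, (hsummable.hasSum.prod_fiberwise hfiber).tsum_eq]
  exact hsummable.hasSum

lemma LSeriesHasSum.hasSum_term_succ {f : ℕ → ℂ} {s a : ℂ} (h : LSeriesHasSum f s a) :
    HasSum (fun n ↦ LSeries.term f s (n + 1)) a :=
  (Nat.succ_injective.hasSum_iff fun n hn ↦ by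
    obtain rfl : n = 0 := by simpa using hn
    rfl).mpr h

theorem mellin_neg_tsum_mul_log_one_sub_exp {a : ℕ → ℝ} {s : ℂ} (hs : 0 < s.re)
    (ha : LSeriesSummable (fun n ↦ (a n : ℂ)) s) :
    mellin (fun t : ℝ ↦
        ((-∑' n : ℕ, a (n + 1) * Real.log (1 - Real.exp (-(t * (n + 1)))) : ℝ) : ℂ)) s =
      Gamma s * L (fun n ↦ (a n : ℂ)) s * riemannZeta (s + 1) := by
  have hs1 : 1 < (s + 1).re := by simp [hs]
  have hF (t : ℝ) (ht : t ∈ Set.Ioi 0) : HasSum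
      (fun q : ℕ × ℕ ↦ ((a (q.1 + 1) / (q.2 + 1) : ℝ) : ℂ) *
        Real.exp (-((q.1 + 1) * (q.2 + 1)) * t))
      ((-∑' n : ℕ, a (n + 1) * Real.log (1 - Real.exp (-(t * (n + 1)))) : ℝ) : ℂ) := by
    have := hasSum_neg_tsum_mul_log_one_sub_exp ht
      (by simpa using ha.summable_norm_mul_exp_neg_mul ht)
    exact_mod_cast Complex.hasSum_ofReal.mpr this
  have hnorm : Summable fun q : ℕ × ℕ ↦ ‖((a (q.1 + 1) / (q.2 + 1) : ℝ) : ℂ)‖ /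
      (((q.1 : ℝ) + 1) * (q.2 + 1)) ^ s.re := by
    refine ((summable_nat_add_iff 1).mpr ha.norm).mul_of_nonneg
      ((summable_nat_add_iff 1).mpr (LSeriesSummable_one_iff.mpr hs1).norm)
      (fun _ ↦ norm_nonneg _) (fun _ ↦ norm_nonneg _) |>.congr fun ⟨n, k⟩ ↦ ?_
    have hn : (0 : ℝ) < n + 1 := by positivity
    have hk : (0 : ℝ) < k + 1 := by positivity
    simp only [LSeries.norm_term_eq, if_neg (Nat.succ_ne_zero _), Pi.one_apply, norm_one,
      Complex.norm_real, norm_div, Real.norm_of_nonneg hk.le]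
    push_cast
    rw [Real.mul_rpow hn.le hk.le, add_re, one_re, Real.rpow_add hk, Real.rpow_one]
    field_simp
  have hmellin := hasSum_mellin (fun _ ↦ Or.inr (by positivity)) hs hF hnorm
  refine (ha.LSeriesHasSum.hasSum_term_succ.mul_left (Gamma s)).mul_eq
    (LSeriesHasSum_one hs1).hasSum_term_succ (hmellin.congr_fun fun ⟨n, k⟩ ↦ ?_) |>.symm
  have hn : ((n : ℂ) + 1) ≠ 0 := by exact_mod_cast Nat.succ_ne_zero n
  have hk : ((k : ℂ) + 1) ≠ 0 := by exact_mod_cast Nat.succ_ne_zero k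
  simp only [LSeries.term_of_ne_zero (Nat.succ_ne_zero _), Pi.one_apply, ofReal_mul,
    mul_cpow_ofReal_nonneg (by positivity : (0 : ℝ) ≤ n + 1) (by positivity : (0 : ℝ) ≤ k + 1)]
  push_cast
  rw [cpow_add _ _ hk, cpow_one]
  field_simp

/-- The Mellin transform of `t ↦ log S(e^{-t}) = -∑_{n≥1} φ(n) log(1 - e^{-tn})` equals
`ζ(s+1) ζ(s-1) Γ(s) / ζ(s)` for `Re(s) > 2`. -/
theorem mellin_log_S (s : ℂ) (hs : 2 < s.re) :
    ∫ t in Set.Ioi (0 : ℝ),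
        ((-∑' n : ℕ, (Nat.totient (n + 1) : ℝ) *
            Real.log (1 - Real.exp (-(t * (n + 1)))) : ℝ) : ℂ) * (t : ℂ) ^ (s - 1) =
      riemannZeta (s + 1) * riemannZeta (s - 1) * Complex.Gamma s / riemannZeta s := by
  have hsummable : LSeriesSummable (fun n ↦ ((n.totient : ℝ) : ℂ)) s := by
    simpa using LSeriesSummable_totient hs
  have hL : L (fun n ↦ ((n.totient : ℝ) : ℂ)) s = riemannZeta (s - 1) / riemannZeta s := by
    simpa using LSeries_totient hs
  have hmellin := mellin_neg_tsum_mul_log_one_sub_exp (by linarith) hsummable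
  rw [hL, mellin] at hmellin
  simp only [smul_eq_mul, mul_comm ((_ : ℂ) ^ (s - 1))] at hmellin
  rw [hmellin]
  ring
end

section
/- Let p(n) be the number of NW-convex paths of size n, and let H(n) = ∑_m ∑_{(a,b)∈m} a, where the outer sum is over all multisets m of coprime pairs of total weight n counted by p(n) and the inner sum counts each pair with its multiplicity. Then H(n)/(n·p(n)) → 1/2 as n → ∞; that is, the average position of the ending point of a uniformly random NW-convex path of size n is asymptotically (n/2, n/2). -/
/-!
Reflecting every step `(a, b)` with `a ≠ 0` in the diagonal is an involution on the paths of
size `n` which exchanges horizontal and vertical displacement; only the vertical steps `(0, 1)`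
stay put. Hence `2 H(n) + K(n) = n p(n)`, where `K(n)` is the total number of steps `(0, 1)` in
all paths of size `n`, and it remains to show `K(n) = o(n p(n))`.

Removing `j` vertical steps gives `K(n) ≤ ∑_{1 ≤ j ≤ n} p(n - j)`. Conversely, the weight `j` can be
put back as one step `(a, 1)` followed by vertical steps in about `j/2` ways that a path of size
`n` can only absorb about `2n/j` times, so `j² p(n - j) ≤ 4 n p(n)`. Splitting the sum at
`j = n/k` gives `K(n) ≤ (n/k + 4k²) p(n)` for every `k`.
-/

open Real Filter

/-- The number of NW-convex paths of size `n`: multisets of pairs `(a, b)` of natural numbers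
with `b ≥ 1` and `gcd a b = 1`, whose total weight `∑ (a + b)` equals `n`. -/
noncomputable def pNW (n : ℕ) : ℕ :=
  Nat.card {m : Multiset (ℕ × ℕ) //
    (∀ ab ∈ m, 1 ≤ ab.2 ∧ Nat.gcd ab.1 ab.2 = 1) ∧
    (m.map fun ab => ab.1 + ab.2).sum = n}

/-- `H(n)`: the total horizontal displacement, summed over all NW-convex paths of size `n`,
i.e. the sum over all multisets counted by `pNW n` of the sum (with multiplicity) of the
first coordinates of their pairs. -/
noncomputable def HNW (n : ℕ) : ℝ :=
  ∑' m : {m : Multiset (ℕ × ℕ) //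
      (∀ ab ∈ m, 1 ≤ ab.2 ∧ Nat.gcd ab.1 ab.2 = 1) ∧
      (m.map fun ab => ab.1 + ab.2).sum = n},
    ((m.1.map fun ab => ab.1).sum : ℝ)

open Topology Finset

namespace NWConvex

def IsStep (ab : ℕ × ℕ) : Prop := 1 ≤ ab.2 ∧ Nat.Coprime ab.1 ab.2

def weight (m : Multiset (ℕ × ℕ)) : ℕ := (m.map fun ab => ab.1 + ab.2).sum

def endX (m : Multiset (ℕ × ℕ)) : ℕ := (m.map fun ab => ab.1).sum

abbrev up : ℕ × ℕ := (0, 1)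

lemma isStep_up : IsStep up := ⟨le_rfl, Nat.coprime_one_right 0⟩

lemma isStep_mk_one (a : ℕ) : IsStep (a, 1) := ⟨le_rfl, Nat.coprime_one_right a⟩

@[simp] lemma weight_add (m e : Multiset (ℕ × ℕ)) : weight (m + e) = weight m + weight e := by
  simp [weight]

lemma weight_mono {e m : Multiset (ℕ × ℕ)} (h : e ≤ m) : weight e ≤ weight m := by
  rw [← add_tsub_cancel_of_le h, weight_add]
  exact Nat.le_add_right _ _

lemma card_le_weight {m : Multiset (ℕ × ℕ)} (hm : ∀ ab ∈ m, IsStep ab) :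
    Multiset.card m ≤ weight m := by
  have := Multiset.card_nsmul_le_sum (s := m.map fun ab => ab.1 + ab.2) (a := 1) <| by
    simp only [Multiset.mem_map]
    rintro _ ⟨ab, hab, rfl⟩
    exact (hm ab hab).1.trans (Nat.le_add_left _ _)
  simpa [weight] using this

lemma le_nsmul_box {m : Multiset (ℕ × ℕ)} (hm : ∀ ab ∈ m, IsStep ab) :
    m ≤ weight m • (range (weight m + 1) ×ˢ range (weight m + 1)).val := by
  classical
  refine Multiset.le_iff_count.2 fun ab => ?_
  by_cases hab : ab ∈ m
  · have hle : ab.1 + ab.2 ≤ weight m :=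
      Multiset.le_sum_of_mem (Multiset.mem_map_of_mem (fun ab : ℕ × ℕ => ab.1 + ab.2) hab)
    rw [Multiset.count_nsmul, Multiset.count_eq_one_of_mem (nodup _)
      (by simp only [mem_val, mem_product, mem_range]; omega), mul_one]
    exact (Multiset.count_le_card ab m).trans (card_le_weight hm)
  · simp [Multiset.count_eq_zero_of_notMem hab]

-- A path of size `n` has at most `n` steps, each of size at most `n`, so it lies in this box.
open scoped Classical in
noncomputable def paths (n : ℕ) : Finset (Multiset (ℕ × ℕ)) :=
  {m ∈ Iic (n • (range (n + 1) ×ˢ range (n + 1)).val) | (∀ ab ∈ m, IsStep ab) ∧ weight m = n}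

lemma mem_paths {n : ℕ} {m : Multiset (ℕ × ℕ)} :
    m ∈ paths n ↔ (∀ ab ∈ m, IsStep ab) ∧ weight m = n := by
  simp only [paths, mem_filter, mem_Iic, and_iff_right_iff_imp]
  rintro ⟨hm, rfl⟩
  exact le_nsmul_box hm

lemma add_mem_paths {i j : ℕ} {m e : Multiset (ℕ × ℕ)} (hm : m ∈ paths i) (he : e ∈ paths j) :
    m + e ∈ paths (i + j) := by
  rw [mem_paths] at *
  refine ⟨fun ab hab => ?_, by rw [weight_add, hm.2, he.2]⟩
  rcases Multiset.mem_add.1 hab with h | h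
  exacts [hm.1 ab h, he.1 ab h]

lemma sub_mem_paths {n : ℕ} {m e : Multiset (ℕ × ℕ)} (hm : m ∈ paths n) (he : e ≤ m) :
    m - e ∈ paths (n - weight e) := by
  rw [mem_paths] at *
  refine ⟨fun ab hab => hm.1 ab (Multiset.mem_of_le tsub_le_self hab), ?_⟩
  have := weight_add (m - e) e
  rw [tsub_add_cancel_of_le he, hm.2] at this
  omega

lemma replicate_up_mem_paths (j : ℕ) : Multiset.replicate j up ∈ paths j :=
  mem_paths.2 ⟨fun ab hab => Multiset.eq_of_mem_replicate hab ▸ isStep_up, by simp [weight]⟩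

lemma cons_replicate_up_mem_paths (a j : ℕ) :
    (a, 1) ::ₘ Multiset.replicate j up ∈ paths (a + 1 + j) := by
  rw [← Multiset.singleton_add]
  refine add_mem_paths (mem_paths.2 ⟨?_, by simp [weight]⟩) (replicate_up_mem_paths j)
  simpa using isStep_mk_one a

def reflect (ab : ℕ × ℕ) : ℕ × ℕ := if ab.1 = 0 then ab else ab.swap

lemma IsStep.reflect {ab : ℕ × ℕ} (h : IsStep ab) : IsStep (reflect ab) := by
  unfold NWConvex.reflect
  split_ifs with ha
  · exact h
  · exact ⟨Nat.one_le_iff_ne_zero.2 ha, h.2.symm⟩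

lemma reflect_reflect {ab : ℕ × ℕ} (h : IsStep ab) : reflect (reflect ab) = ab := by
  obtain ⟨a, b⟩ := ab
  have hb : b ≠ 0 := Nat.one_le_iff_ne_zero.1 h.1
  by_cases ha : a = 0 <;> simp [reflect, ha, hb]

lemma weight_map_reflect (m : Multiset (ℕ × ℕ)) : weight (m.map reflect) = weight m := by
  simp only [weight, Multiset.map_map]
  congr 1
  refine Multiset.map_congr rfl fun ab _ => ?_
  simp only [Function.comp, reflect]
  split_ifs <;> simp [add_comm]

lemma map_reflect_mem_paths {n : ℕ} {m : Multiset (ℕ × ℕ)} (hm : m ∈ paths n) :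
    m.map reflect ∈ paths n := by
  rw [mem_paths] at *
  refine ⟨fun ab hab => ?_, (weight_map_reflect m).trans hm.2⟩
  obtain ⟨cd, hcd, rfl⟩ := Multiset.mem_map.1 hab
  exact (hm.1 cd hcd).reflect

lemma map_reflect_map_reflect {m : Multiset (ℕ × ℕ)} (hm : ∀ ab ∈ m, IsStep ab) :
    (m.map reflect).map reflect = m := by
  rw [Multiset.map_map]
  exact (Multiset.map_congr rfl fun ab hab => reflect_reflect (hm ab hab)).trans (Multiset.map_id m)

lemma endX_add_endX_map_reflect_add_count_up {m : Multiset (ℕ × ℕ)} (hm : ∀ ab ∈ m, IsStep ab) :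
    endX m + endX (m.map reflect) + m.count up = weight m := by
  induction m using Multiset.induction_on with
  | empty => simp [endX, weight]
  | cons ab m ih =>
    rw [Multiset.forall_mem_cons] at hm
    have := ih hm.2
    obtain ⟨a, b⟩ := ab
    obtain ⟨hb, hab⟩ := hm.1
    simp only [endX, weight, Multiset.map_cons, Multiset.sum_cons, Multiset.count_cons] at this ⊢
    by_cases ha : a = 0
    · subst ha
      obtain rfl : b = 1 := by simpa using hab
      simp only [reflect, if_true]
      omega
    · have hne : up ≠ (a, b) := by simp [Prod.ext_iff, Ne.symm ha]
      simp only [reflect, if_neg ha, if_neg hne, Prod.fst_swap]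
      omega

noncomputable def totalEndX (n : ℕ) : ℕ := ∑ m ∈ paths n, endX m

noncomputable def totalUp (n : ℕ) : ℕ := ∑ m ∈ paths n, m.count up

lemma sum_endX_map_reflect (n : ℕ) : ∑ m ∈ paths n, endX (m.map reflect) = totalEndX n :=
  sum_nbij' (fun m => m.map reflect) (fun m => m.map reflect)
    (fun _ hm => map_reflect_mem_paths hm) (fun _ hm => map_reflect_mem_paths hm)
    (fun _ hm => map_reflect_map_reflect (mem_paths.1 hm).1)
    (fun _ hm => map_reflect_map_reflect (mem_paths.1 hm).1) (fun _ _ => rfl)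

lemma two_mul_totalEndX_add_totalUp (n : ℕ) : 2 * totalEndX n + totalUp n = n * #(paths n) := by
  calc 2 * totalEndX n + totalUp n
      = ∑ m ∈ paths n, (endX m + endX (m.map reflect) + m.count up) := by
        rw [sum_add_distrib, sum_add_distrib, sum_endX_map_reflect, totalUp, totalEndX]; ring
    _ = ∑ _m ∈ paths n, n := sum_congr rfl fun m hm =>
        (endX_add_endX_map_reflect_add_count_up (mem_paths.1 hm).1).trans (mem_paths.1 hm).2
    _ = n * #(paths n) := by rw [sum_const, smul_eq_mul, mul_comm]

lemma card_paths_mono {i n : ℕ} (h : i ≤ n) : #(paths i) ≤ #(paths n) := by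
  refine card_le_card_of_injOn (· + Multiset.replicate (n - i) up) (fun m hm => ?_)
    (fun _ _ _ _ => add_right_cancel)
  simpa [h] using add_mem_paths hm (replicate_up_mem_paths (n - i))

lemma card_mul_le_weight_of_forall_mem {M : Multiset (ℕ × ℕ)} {A : Finset ℕ} {h : ℕ}
    (hA : ∀ a ∈ A, h ≤ a ∧ (a, 1) ∈ M) : #A * (h + 1) ≤ weight M := by
  classical
  set B := A.image fun a => (a, 1)
  have hB : B.val ≤ M := (Multiset.le_iff_subset (nodup _)).2 fun ab hab => by
    obtain ⟨a, ha, rfl⟩ := mem_image.1 hab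
    exact (hA a ha).2
  calc #A * (h + 1) = #B • (h + 1) := by
        rw [card_image_of_injective _ fun a b e => congrArg Prod.fst e, smul_eq_mul]
    _ ≤ weight B.val := card_nsmul_le_sum _ (fun ab : ℕ × ℕ => ab.1 + ab.2) _ fun ab hab => by
        obtain ⟨a, ha, rfl⟩ := mem_image.1 hab
        exact Nat.succ_le_succ (hA a ha).1
    _ ≤ weight M := weight_mono hB

/- Padding a path of size `n - j` with one step `(a, 1)`, `⌊j/2⌋ ≤ a < j`, and `j - 1 - a` steps
`up` gives a path of size `n`. A path of size `n` contains at most `n / (⌊j/2⌋ + 1)` distinct such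
steps `(a, 1)`, so it arises that often at most among the `⌈j/2⌉` paddings. -/
lemma sq_mul_card_paths_sub_le {n j : ℕ} (hj : j ≤ n) :
    j ^ 2 * #(paths (n - j)) ≤ 4 * n * #(paths n) := by
  classical
  set h := j / 2
  let pad (x : ℕ × Multiset (ℕ × ℕ)) : Multiset (ℕ × ℕ) :=
    x.2 + (x.1, 1) ::ₘ Multiset.replicate (j - 1 - x.1) up
  have maps : ∀ x ∈ Ico h j ×ˢ paths (n - j), pad x ∈ paths n := by
    rintro ⟨a, m⟩ hx
    rw [mem_product, mem_Ico] at hx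
    have := add_mem_paths hx.2 (cons_replicate_up_mem_paths a (j - 1 - a))
    rwa [show n - j + (a + 1 + (j - 1 - a)) = n by omega] at this
  have fiber : ∀ M ∈ paths n, #{x ∈ Ico h j ×ˢ paths (n - j) | pad x = M} ≤ n / (h + 1) := by
    intro M hM
    set F := {x ∈ Ico h j ×ˢ paths (n - j) | pad x = M}
    have inj : Set.InjOn Prod.fst (F : Set (ℕ × Multiset (ℕ × ℕ))) := by
      rintro ⟨a, m⟩ hx ⟨a', m'⟩ hx' (rfl : a = a')
      have := (mem_filter.1 hx).2.trans (mem_filter.1 hx').2.symm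
      rw [show m = m' from add_right_cancel this]
    rw [Nat.le_div_iff_mul_le h.succ_pos, ← (mem_paths.1 hM).2, ← card_image_of_injOn inj]
    refine card_mul_le_weight_of_forall_mem fun a ha => ?_
    obtain ⟨⟨a, m⟩, hx, rfl⟩ := mem_image.1 ha
    obtain ⟨hmem, hpad⟩ := mem_filter.1 hx
    exact ⟨(mem_Ico.1 (mem_product.1 hmem).1).1, by simp [← hpad, pad]⟩
  have count := card_le_mul_card_image_of_maps_to maps _ fiber
  rw [card_product, Nat.card_Ico] at count
  have hsq : j ^ 2 ≤ 4 * ((h + 1) * (j - h)) := by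
    rcases (show j = 2 * h ∨ j = 2 * h + 1 by omega) with hj2 | hj2 <;> rw [hj2]
    · rw [show 2 * h - h = h by omega]; nlinarith
    · rw [show 2 * h + 1 - h = h + 1 by omega]; nlinarith
  calc j ^ 2 * #(paths (n - j)) ≤ 4 * ((h + 1) * (j - h)) * #(paths (n - j)) :=
        Nat.mul_le_mul_right _ hsq
    _ = 4 * (h + 1) * ((j - h) * #(paths (n - j))) := by ring
    _ ≤ 4 * (h + 1) * (n / (h + 1) * #(paths n)) := Nat.mul_le_mul_left _ count
    _ = 4 * ((h + 1) * (n / (h + 1))) * #(paths n) := by ring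
    _ ≤ 4 * n * #(paths n) := by gcongr; exact Nat.mul_div_le n (h + 1)

lemma totalUp_le_sum (n : ℕ) : totalUp n ≤ ∑ j ∈ Icc 1 n, #(paths (n - j)) := by
  classical
  have layers : ∀ m ∈ paths n, m.count up = ∑ j ∈ Icc 1 n, if j ≤ m.count up then 1 else 0 := by
    intro m hm
    have hc : m.count up ≤ n := (Multiset.count_le_card _ _).trans
      ((card_le_weight (mem_paths.1 hm).1).trans_eq (mem_paths.1 hm).2)
    rw [← card_filter, show {j ∈ Icc 1 n | j ≤ m.count up} = Icc 1 (m.count up) by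
      ext; simp only [mem_filter, mem_Icc]; omega, Nat.card_Icc, Nat.add_sub_cancel]
  calc totalUp n = ∑ j ∈ Icc 1 n, #{m ∈ paths n | j ≤ m.count up} := by
        rw [totalUp, sum_congr rfl layers, sum_comm]
        simp only [card_filter]
    _ ≤ ∑ j ∈ Icc 1 n, #(paths (n - j)) := by
        refine sum_le_sum fun j _ => card_le_card_of_injOn (· - Multiset.replicate j up)
          (fun m hm => ?_) (fun m hm m' hm' he => ?_)
        · obtain ⟨hm, hj⟩ := mem_filter.1 hm
          simpa [weight] using sub_mem_paths hm (Multiset.le_count_iff_replicate_le.1 hj)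
        · exact (tsub_left_inj (Multiset.le_count_iff_replicate_le.1 (mem_filter.1 hm).2)
            (Multiset.le_count_iff_replicate_le.1 (mem_filter.1 hm').2)).1 he

lemma mul_card_paths_sub_le_of_lt {n j k : ℕ} (hj : j ≤ n) (hkj : n < k * j) :
    n * #(paths (n - j)) ≤ 4 * k ^ 2 * #(paths n) := by
  have hn : 0 < n := Nat.pos_of_ne_zero fun hn => by subst hn; simp_all
  refine Nat.le_of_mul_le_mul_left ?_ hn
  calc n * (n * #(paths (n - j))) ≤ (k * j) ^ 2 * #(paths (n - j)) := by
        rw [← mul_assoc, ← sq]; gcongr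
    _ = k ^ 2 * (j ^ 2 * #(paths (n - j))) := by ring
    _ ≤ k ^ 2 * (4 * n * #(paths n)) := Nat.mul_le_mul_left _ (sq_mul_card_paths_sub_le hj)
    _ = n * (4 * k ^ 2 * #(paths n)) := by ring

lemma card_paths_pos (n : ℕ) : 0 < #(paths n) := card_pos.2 ⟨_, replicate_up_mem_paths n⟩

lemma totalUp_le {k : ℕ} (hk : 0 < k) (n : ℕ) :
    (totalUp n : ℝ) ≤ (n / k + 4 * k ^ 2) * #(paths n) := by
  classical
  have term : ∀ j ∈ Icc 1 n, (#(paths (n - j)) : ℝ) ≤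
      #(paths n) * ((if k * j ≤ n then 1 else 0) + 4 * k ^ 2 / n) := by
    intro j hj
    rw [mem_Icc] at hj
    have hn : (0 : ℝ) < n := by exact_mod_cast hj.1.trans hj.2
    split_ifs with hkj
    · rw [mul_add, mul_one]
      exact le_add_of_le_of_nonneg (by exact_mod_cast card_paths_mono (Nat.sub_le n j))
        (by positivity)
    · have := mul_card_paths_sub_le_of_lt hj.2 (not_le.1 hkj)
      rw [zero_add, ← mul_div_assoc, le_div_iff₀ hn]
      calc (#(paths (n - j)) : ℝ) * n = ((n * #(paths (n - j)) : ℕ) : ℝ) := by push_cast; ring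
        _ ≤ ((4 * k ^ 2 * #(paths n) : ℕ) : ℝ) := by exact_mod_cast this
        _ = #(paths n) * (4 * k ^ 2) := by push_cast; ring
  have short : (#{j ∈ Icc 1 n | k * j ≤ n} : ℝ) ≤ n / k := by
    refine le_trans ?_ (Nat.cast_div_le (α := ℝ))
    refine Nat.cast_le.2 ((card_le_card fun j hj => ?_).trans (Nat.card_Icc 1 (n / k)).le)
    rw [mem_filter, mem_Icc] at hj
    rw [mem_Icc, Nat.le_div_iff_mul_le hk]
    exact ⟨hj.1.1, by linarith [hj.2]⟩
  have long : (n : ℝ) * (4 * k ^ 2 / n) ≤ 4 * k ^ 2 := by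
    rcases eq_or_ne (n : ℝ) 0 with hn | hn
    · rw [hn, zero_mul]; positivity
    · rw [mul_div_cancel₀ _ hn]
  calc (totalUp n : ℝ) ≤ ∑ j ∈ Icc 1 n, (#(paths (n - j)) : ℝ) := by
        exact_mod_cast totalUp_le_sum n
    _ ≤ ∑ j ∈ Icc 1 n, (#(paths n) : ℝ) * ((if k * j ≤ n then 1 else 0) + 4 * k ^ 2 / n) :=
        sum_le_sum term
    _ = (#{j ∈ Icc 1 n | k * j ≤ n} + n * (4 * k ^ 2 / n)) * #(paths n) := by
        rw [← mul_sum, sum_add_distrib, sum_boole, sum_const, Nat.card_Icc, nsmul_eq_mul,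
          Nat.add_sub_cancel, mul_comm]
    _ ≤ (n / k + 4 * k ^ 2) * #(paths n) := by gcongr

lemma tendsto_totalUp_div :
    Tendsto (fun n : ℕ => (totalUp n : ℝ) / (n * #(paths n))) atTop (𝓝 0) := by
  refine tendsto_order.2 ⟨fun a ha => Eventually.of_forall fun n => ha.trans_le (by positivity),
    fun ε hε => ?_⟩
  obtain ⟨k, hk⟩ := exists_nat_one_div_lt (half_pos hε)
  have hlim := tendsto_const_div_atTop_nhds_zero_nat (4 * ((k : ℝ) + 1) ^ 2)
  filter_upwards [hlim.eventually (gt_mem_nhds (half_pos hε)), eventually_gt_atTop 0]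
    with n hsmall hn0
  have hn : (0 : ℝ) < n := by exact_mod_cast hn0
  have hP : (0 : ℝ) < #(paths n) := by exact_mod_cast card_paths_pos n
  have hbound := totalUp_le k.succ_pos n
  push_cast at hbound
  calc (totalUp n : ℝ) / (n * #(paths n)) ≤ (n / (k + 1) + 4 * (k + 1) ^ 2) / n := by
        rw [div_le_div_iff₀ (by positivity) hn]
        nlinarith
    _ = 1 / (k + 1) + 4 * (k + 1) ^ 2 / n := by field_simp
    _ < ε := by linarith

lemma pNW_eq_card (n : ℕ) : pNW n = #(paths n) := by
  rw [pNW, ← Nat.card_eq_finsetCard]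
  exact Nat.card_congr (Equiv.subtypeEquivRight fun m => mem_paths.symm)

lemma HNW_eq_totalEndX (n : ℕ) : HNW n = totalEndX n := by
  rw [HNW, totalEndX, Nat.cast_sum, ← Finset.tsum_subtype,
    ← (Equiv.subtypeEquivRight fun m => mem_paths.symm).tsum_eq]
  refine tsum_congr fun m => ?_
  rw [endX, Nat.cast_multiset_sum, Multiset.map_map]
  rfl

lemma HNW_div_eq {n : ℕ} (hn0 : 0 < n) :
    HNW n / (n * pNW n) = (1 - totalUp n / (n * #(paths n))) / 2 := by
  have h := two_mul_totalEndX_add_totalUp n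
  have hn : (0 : ℝ) < n := by exact_mod_cast hn0
  have hP : (0 : ℝ) < #(paths n) := by exact_mod_cast card_paths_pos n
  rw [HNW_eq_totalEndX, pNW_eq_card]
  field_simp
  rw [← Nat.cast_mul, ← h]
  push_cast
  ring

end NWConvex

open NWConvex in
/-- The average abscissa of the ending point of a uniformly random NW-convex path of size `n`
is asymptotically `n/2`: `H(n)/(n p(n)) → 1/2`. -/
theorem average_endpoint :
    Tendsto (fun n : ℕ => HNW n / ((n : ℝ) * (pNW n : ℝ))) atTop (nhds (1 / 2)) := by
  have h := (tendsto_totalUp_div.const_sub 1).div_const 2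
  rw [sub_zero] at h
  refine h.congr' ?_
  filter_upwards [eventually_gt_atTop 0] with n hn using (HNW_div_eq hn).symm
end

section
/- As x → 1⁻ (x real, 0 < x < 1), μ₁(x) := ∑_{n≥1} n·φ(n)·xⁿ/(1−xⁿ) is asymptotically equivalent to 12ζ(3)/(π²(1−x)³); that is, μ₁(x)·(1−x)³ → 12ζ(3)/π². (μ₁(x) = x·S′(x)/S(x) is the expected size of the output of the Boltzmann sampler of parameter x for NW-convex paths.) -/
/-!
Let `c(m) = ∏_{p ∣ m} (1 - p) = ∑_{d ∣ m} μ(d) d`. Since `n φ(n) = ∑_{de = n} μ(d) d e²`, the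
coefficients of the Lambert series satisfy `∑_{d ∣ N} d φ(d) = ∑_{de = N} c(d) e²`, and regrouping
the double series gives
`μ₁(x) = ∑_m c(m) ∑_k k² x^{mk} = ∑_m c(m) x^m (1 + x^m) / (1 - x^m)³`.
After multiplication by `(1 - x)³` the `m`-th term tends to `2 c(m) / m³` as `x → 1⁻`, and since
`x^m ≤ exp (-m (1 - x))` and `|c(m)| ≤ m` it is bounded by `12 / m²`. Dominated convergence
gives the limit `2 ∑_m c(m) / m³ = 2 ζ(3) / ζ(2) = 12 ζ(3) / π²`.
-/

open Real Filter
open ArithmeticFunction LSeries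
open scoped ArithmeticFunction.Moebius ArithmeticFunction.zeta LSeries.notation Topology

def prodOneSubPrimeFactors : ArithmeticFunction ℤ :=
  prodPrimeFactors fun p => 1 - (p : ℤ)

def idMulTotient : ArithmeticFunction ℤ :=
  ⟨fun n => n * n.totient, by simp⟩

theorem sum_range_moebius_prime_pow_mul {p : ℕ} (hp : p.Prime) {k : ℕ} (hk : k ≠ 0) :
    ∑ i ∈ Finset.range (k + 1), μ (p ^ i) * ((p ^ i : ℕ) : ℤ) = 1 - p := by
  obtain ⟨k, rfl⟩ := Nat.exists_eq_succ_of_ne_zero hk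
  rw [Finset.sum_range_succ', Finset.sum_range_succ']
  have hvanish (i : ℕ) : μ (p ^ (i + 1 + 1)) = 0 := by
    rw [moebius_apply_prime_pow hp (by omega), if_neg (by omega)]
  simp [hvanish, moebius_apply_prime hp]
  ring

theorem prodOneSubPrimeFactors_eq :
    prodOneSubPrimeFactors = pmul μ ↑ArithmeticFunction.id * ↑ζ := by
  refine (IsMultiplicative.eq_iff_eq_on_prime_powers _ (IsMultiplicative.prodPrimeFactors _) _
    ((isMultiplicative_moebius.pmul isMultiplicative_id.natCast).mul
      isMultiplicative_zeta.natCast)).mpr fun p k hp => ?_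
  rcases eq_or_ne k 0 with rfl | hk
  · simp
  rw [coe_mul_zeta_apply, Nat.sum_divisors_prime_pow hp,
    prodPrimeFactors_apply (pow_ne_zero _ hp.ne_zero), Nat.primeFactors_prime_pow hk hp,
    Finset.prod_singleton, ← sum_range_moebius_prime_pow_mul hp hk]
  simp [pmul_apply]

theorem abs_prodOneSubPrimeFactors_le (n : ℕ) : |prodOneSubPrimeFactors n| ≤ n := by
  rcases eq_or_ne n 0 with rfl | hn
  · simp
  rw [prodOneSubPrimeFactors, prodPrimeFactors_apply hn, Finset.abs_prod]
  calc ∏ p ∈ n.primeFactors, |1 - (p : ℤ)| ≤ ∏ p ∈ n.primeFactors, (p : ℤ) := by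
        refine Finset.prod_le_prod (fun _ _ => abs_nonneg _) fun p hp => ?_
        have := (Nat.prime_of_mem_primeFactors hp).one_le
        rw [abs_sub_comm, abs_of_nonneg (by omega)]
        omega
    _ ≤ n := by
        rw [← Nat.cast_prod]
        exact_mod_cast Nat.le_of_dvd (Nat.pos_of_ne_zero hn) n.prod_primeFactors_dvd

theorem abs_idMulTotient_le (n : ℕ) : |idMulTotient n| ≤ n ^ 2 := by
  rw [idMulTotient, coe_mk, abs_of_nonneg (by positivity), sq]
  gcongr
  exact_mod_cast n.totient_le

theorem ArithmeticFunction.pmul_natCoe_id_mul {R : Type*} [CommSemiring R]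
    (f g : ArithmeticFunction R) :
    (f * g).pmul ↑ArithmeticFunction.id =
      f.pmul ↑ArithmeticFunction.id * g.pmul ↑ArithmeticFunction.id := by
  ext n
  simp only [pmul_apply, mul_apply, natCoe_apply, id_apply, Finset.sum_mul]
  refine Finset.sum_congr rfl fun d hd => ?_
  rw [← (Nat.mem_divisorsAntidiagonal.mp hd).1]
  push_cast
  ring

theorem ArithmeticFunction.moebius_mul_natCoe_id_apply (n : ℕ) :
    (μ * ↑ArithmeticFunction.id : ArithmeticFunction ℤ) n = n.totient := by
  let Φ : ArithmeticFunction ℤ := ⟨fun n => n.totient, by simp⟩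
  have hΦ : ↑ζ * Φ = ↑ArithmeticFunction.id := by
    ext n
    rw [coe_zeta_mul_apply]
    simp only [Φ, coe_mk, natCoe_apply, id_apply]
    exact_mod_cast n.sum_totient
  rw [← hΦ, ← mul_assoc, moebius_mul_coe_zeta, one_mul]
  rfl

theorem idMulTotient_mul_zeta :
    idMulTotient * ↑ζ = prodOneSubPrimeFactors * ↑(ArithmeticFunction.pow 2) := by
  have hφ : idMulTotient = (μ * ↑ArithmeticFunction.id).pmul ↑ArithmeticFunction.id := by
    ext n
    rw [pmul_apply, moebius_mul_natCoe_id_apply]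
    simp [idMulTotient, mul_comm]
  have hsq : (ArithmeticFunction.id : ArithmeticFunction ℤ).pmul ↑ArithmeticFunction.id =
      ↑(ArithmeticFunction.pow 2) := by
    ext n
    simp [pmul_apply, pow_apply, sq]
  rw [hφ, pmul_natCoe_id_mul, hsq, prodOneSubPrimeFactors_eq]
  ring

section Lambert

variable {f g : ArithmeticFunction ℝ} {k l : ℕ} {x : ℝ}

theorem summable_apply_mul_apply_mul_pow_mul (hf : ∀ n, |f n| ≤ n ^ k) (hg : ∀ n, |g n| ≤ n ^ l)
    (hx0 : 0 < x) (hx1 : x < 1) :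
    Summable fun p : ℕ × ℕ => f p.1 * g p.2 * x ^ (p.1 * p.2) := by
  have hx : ‖x‖ < 1 := by rwa [norm_of_nonneg hx0.le]
  have hbound : Summable fun p : ℕ × ℕ =>
      ((p.1 : ℝ) ^ k * x ^ p.1) * ((p.2 : ℝ) ^ l * x ^ p.2) * x⁻¹ :=
    (summable_mul_of_summable_norm (summable_norm_pow_mul_geometric_of_norm_lt_one k hx)
      (summable_norm_pow_mul_geometric_of_norm_lt_one l hx)).mul_right _
  refine hbound.of_norm_bounded fun ⟨n, j⟩ => ?_
  rcases eq_or_ne n 0 with rfl | hn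
  · simp only [ArithmeticFunction.map_zero, zero_mul, norm_zero]
    positivity
  rcases eq_or_ne j 0 with rfl | hj
  · simp only [ArithmeticFunction.map_zero, mul_zero, zero_mul, norm_zero]
    positivity
  -- `n j + 1 ≥ n + j` since `(n - 1) (j - 1) ≥ 0`
  have hpow : x ^ (n * j) * x ≤ x ^ n * x ^ j := by
    rw [← pow_succ, ← pow_add]
    exact pow_le_pow_of_le_one hx0.le hx1.le
      (by nlinarith [Nat.one_le_iff_ne_zero.2 hn, Nat.one_le_iff_ne_zero.2 hj])
  have hpow' : x ^ (n * j) ≤ x ^ n * x ^ j * x⁻¹ := (le_mul_inv_iff₀ hx0).mpr hpow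
  rw [norm_mul, norm_mul, norm_of_nonneg (by positivity : 0 ≤ x ^ (n * j))]
  calc ‖f n‖ * ‖g j‖ * x ^ (n * j) ≤ (n : ℝ) ^ k * (j : ℝ) ^ l * (x ^ n * x ^ j * x⁻¹) := by
        gcongr
        exacts [hf n, hg j]
    _ = _ := by ring

theorem tsum_mul_tsum_pow_pow_eq_tsum_mul_apply (hf : ∀ n, |f n| ≤ n ^ k)
    (hg : ∀ n, |g n| ≤ n ^ l) (hx0 : 0 < x) (hx1 : x < 1) :
    ∑' n, f n * ∑' j, g j * (x ^ n) ^ j = ∑' N, (f * g) N * x ^ N := by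
  set h : ℕ × ℕ → ℝ := fun p => f p.1 * g p.2 * x ^ (p.1 * p.2)
  have hsum : Summable h := summable_apply_mul_apply_mul_pow_mul hf hg hx0 hx1
  have hfiber (N : ℕ) : ∑' p : (fun p : ℕ × ℕ => p.1 * p.2) ⁻¹' {N}, h p = (f * g) N * x ^ N := by
    rcases eq_or_ne N 0 with rfl | hN
    · have hzero (p : (fun p : ℕ × ℕ => p.1 * p.2) ⁻¹' {0}) : h p = 0 := by
        obtain ⟨⟨n, j⟩, hp⟩ := p
        rcases Nat.mul_eq_zero.mp hp with rfl | rfl <;> simp [h]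
      simp [tsum_congr hzero]
    have : (fun p : ℕ × ℕ => p.1 * p.2) ⁻¹' {N} = ↑N.divisorsAntidiagonal := by
      ext p; simp [hN]
    rw [this, Finset.tsum_subtype' N.divisorsAntidiagonal h, mul_apply, Finset.sum_mul]
    refine Finset.sum_congr rfl fun p hp => ?_
    simp only [h, (Nat.mem_divisorsAntidiagonal.mp hp).1]
  calc ∑' n, f n * ∑' j, g j * (x ^ n) ^ j = ∑' n, ∑' j, h (n, j) := by
        simp only [h, ← tsum_mul_left, mul_assoc, pow_mul]
    _ = ∑' p, h p := (hsum.tsum_prod' hsum.prod_factor).symm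
    _ = ∑' N, (f * g) N * x ^ N := by
        rw [← (hsum.hasSum.tsum_fiberwise fun p => p.1 * p.2).tsum_eq]
        exact tsum_congr hfiber

end Lambert

theorem tsum_add_one_eq_tsum_of_apply_zero {α : Type*} [AddCommMonoid α] [TopologicalSpace α]
    {f : ℕ → α} (hf : f 0 = 0) : ∑' n, f (n + 1) = ∑' n, f n := by
  refine Nat.succ_injective.tsum_eq fun n hn => ?_
  rcases n with _ | m
  · exact absurd hf hn
  · exact ⟨m, rfl⟩

theorem tsum_sq_mul_geometric_of_norm_lt_one {𝕜 : Type*} [NormedField 𝕜] [CompleteSpace 𝕜]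
    {r : 𝕜} (hr : ‖r‖ < 1) : ∑' n : ℕ, (n : 𝕜) ^ 2 * r ^ n = r * (1 + r) / (1 - r) ^ 3 := by
  have hr1 : 1 - r ≠ 0 := sub_ne_zero.mpr (ne_of_apply_ne norm (by simpa using hr.ne'))
  have hchoose (n : ℕ) : (2 * (n + 2).choose 2 : 𝕜) = (n + 2) * (n + 1) := by
    have : 2 * (n + 2).choose 2 = (n + 2) * (n + 1) := by
      rw [Nat.choose_two_right, Nat.mul_div_cancel' (Nat.even_mul_pred_self _).two_dvd]; rfl
    exact_mod_cast congrArg (Nat.cast : ℕ → 𝕜) this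
  have hsum := (((hasSum_choose_mul_geometric_of_norm_lt_one 2 hr).mul_left 2).sub
    ((hasSum_coe_mul_geometric_of_norm_lt_one hr).mul_left 3)).sub
    ((hasSum_geometric_of_norm_lt_one hr).mul_left 2)
  convert hsum.tsum_eq using 1
  · congr 1 with n
    linear_combination (-r ^ n) * hchoose n
  · field_simp
    ring

theorem tsum_zeta_mul_geometric_of_norm_lt_one {𝕜 : Type*} [NormedField 𝕜] [CompleteSpace 𝕜]
    {r : 𝕜} (hr : ‖r‖ < 1) :
    ∑' n : ℕ, ((ArithmeticFunction.zeta : ArithmeticFunction 𝕜) n) * r ^ n = r / (1 - r) := by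
  rw [← tsum_add_one_eq_tsum_of_apply_zero (by simp)]
  simp [pow_succ', tsum_mul_left, tsum_geometric_of_norm_lt_one hr, div_eq_mul_inv]

theorem tsum_mul_totient_lambert_eq {x : ℝ} (hx0 : 0 < x) (hx1 : x < 1) :
    ∑' n : ℕ, ((n + 1 : ℕ) : ℝ) * (Nat.totient (n + 1) : ℝ) * x ^ (n + 1) / (1 - x ^ (n + 1)) =
      ∑' m, (prodOneSubPrimeFactors m : ℝ) * (x ^ m * (1 + x ^ m) / (1 - x ^ m) ^ 3) := by
  have hxn {n : ℕ} (hn : n ≠ 0) : ‖x ^ n‖ < 1 := by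
    rw [norm_pow, norm_of_nonneg hx0.le]
    exact pow_lt_one₀ hx0.le hx1 hn
  set F : ArithmeticFunction ℝ := ↑idMulTotient
  set C : ArithmeticFunction ℝ := ↑prodOneSubPrimeFactors
  set I₂ : ArithmeticFunction ℝ := ↑(ArithmeticFunction.pow 2)
  have hFZ : F * ↑ζ = C * I₂ := by
    rw [← coe_coe, ← intCoe_mul, idMulTotient_mul_zeta, intCoe_mul, coe_coe]
  have hF (n : ℕ) : F n = n * n.totient := by
    rw [intCoe_apply]
    simp [idMulTotient]
  have hFbound (n : ℕ) : |F n| ≤ (n : ℝ) ^ 2 := by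
    show |((idMulTotient n : ℤ) : ℝ)| ≤ _
    exact_mod_cast abs_idMulTotient_le n
  have hZbound (n : ℕ) : |(ζ : ArithmeticFunction ℝ) n| ≤ (n : ℝ) ^ 0 := by
    rw [natCoe_apply, zeta_apply]
    split_ifs <;> simp
  have hCbound (n : ℕ) : |C n| ≤ (n : ℝ) ^ 1 := by
    show |((prodOneSubPrimeFactors n : ℤ) : ℝ)| ≤ (n : ℝ) ^ 1
    rw [pow_one]
    exact_mod_cast abs_prodOneSubPrimeFactors_le n
  have hI₂ (n : ℕ) : I₂ n = (n : ℝ) ^ 2 := by simp [I₂, pow_apply]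
  have hI₂bound (n : ℕ) : |I₂ n| ≤ (n : ℝ) ^ 2 := by rw [hI₂, abs_of_nonneg (by positivity)]
  calc _ = ∑' n, F (n + 1) * ∑' j, (ζ : ArithmeticFunction ℝ) j * (x ^ (n + 1)) ^ j := by
        refine tsum_congr fun n => ?_
        rw [tsum_zeta_mul_geometric_of_norm_lt_one (hxn n.add_one_ne_zero), hF]
        ring
    _ = ∑' n, F n * ∑' j, (ζ : ArithmeticFunction ℝ) j * (x ^ n) ^ j :=
        tsum_add_one_eq_tsum_of_apply_zero
          (f := fun n => F n * ∑' j, (ζ : ArithmeticFunction ℝ) j * (x ^ n) ^ j) (by simp)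
    _ = ∑' N, (C * I₂) N * x ^ N := by
        rw [← hFZ, tsum_mul_tsum_pow_pow_eq_tsum_mul_apply hFbound hZbound hx0 hx1]
    _ = ∑' m, C m * ∑' k, I₂ k * (x ^ m) ^ k :=
        (tsum_mul_tsum_pow_pow_eq_tsum_mul_apply hCbound hI₂bound hx0 hx1).symm
    _ = _ := by
        refine tsum_congr fun m => ?_
        rcases eq_or_ne m 0 with rfl | hm
        · simp [C]
        simp only [hI₂, tsum_sq_mul_geometric_of_norm_lt_one (hxn hm), C, intCoe_apply]

theorem exp_neg_mul_pow_three_le {t : ℝ} (ht : 0 ≤ t) :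
    exp (-t) * t ^ 3 ≤ 6 * (1 - exp (-t)) ^ 3 := by
  have hlin : t ≤ (1 + t) * (1 - exp (-t)) := by
    have : exp (-t) * (1 + t) ≤ 1 := by
      rw [exp_neg, inv_mul_le_iff₀ (exp_pos t), mul_one, add_comm]
      exact add_one_le_exp t
    linarith
  have hcube : exp (-t) * (1 + t) ^ 3 ≤ 6 := by
    have := sum_le_exp_of_nonneg ht 4
    simp only [Finset.sum_range_succ, Finset.sum_range_zero, Nat.factorial] at this
    rw [exp_neg, inv_mul_le_iff₀ (exp_pos t)]
    nlinarith [sq_nonneg t, pow_nonneg ht 3]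
  have hexp : 0 ≤ 1 - exp (-t) := by linarith [exp_le_one_iff.mpr (neg_nonpos.mpr ht)]
  calc exp (-t) * t ^ 3 ≤ exp (-t) * ((1 + t) * (1 - exp (-t))) ^ 3 := by gcongr
    _ = exp (-t) * (1 + t) ^ 3 * (1 - exp (-t)) ^ 3 := by ring
    _ ≤ 6 * (1 - exp (-t)) ^ 3 := mul_le_mul_of_nonneg_right hcube (pow_nonneg hexp 3)

theorem pow_le_exp_neg_mul_one_sub {x : ℝ} (hx : 0 ≤ x) (m : ℕ) : x ^ m ≤ exp (-(m * (1 - x))) := by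
  calc x ^ m ≤ exp (x - 1) ^ m := by
        gcongr
        linarith [add_one_le_exp (x - 1)]
    _ = exp (-(m * (1 - x))) := by rw [← exp_nat_mul]; ring_nf

theorem mul_one_add_div_one_sub_pow_three_monotoneOn :
    MonotoneOn (fun y : ℝ => y * (1 + y) / (1 - y) ^ 3) (Set.Ico 0 1) := by
  rintro y ⟨hy0, -⟩ z ⟨-, hz1⟩ hyz
  have : 0 < 1 - z := by linarith
  have : 0 ≤ z := hy0.trans hyz
  dsimp only
  gcongr

theorem one_sub_pow_three_mul_le {x : ℝ} (hx0 : 0 ≤ x) (hx1 : x < 1) (m : ℕ) :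
    (1 - x) ^ 3 * (x ^ m * (1 + x ^ m) / (1 - x ^ m) ^ 3) ≤ 12 / (m : ℝ) ^ 3 := by
  rcases eq_or_ne m 0 with rfl | hm
  · simp
  set t : ℝ := m * (1 - x)
  have ht : 0 < t := mul_pos (by positivity) (by linarith)
  have hz1 : exp (-t) < 1 := exp_lt_one_iff.mpr (neg_lt_zero.mpr ht)
  have hz1' : 0 < 1 - exp (-t) := by linarith
  have hone_sub : 1 - x = t / m := by rw [eq_div_iff (by positivity), mul_comm]
  calc (1 - x) ^ 3 * (x ^ m * (1 + x ^ m) / (1 - x ^ m) ^ 3)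
      ≤ (1 - x) ^ 3 * (exp (-t) * (1 + exp (-t)) / (1 - exp (-t)) ^ 3) := by
        refine mul_le_mul_of_nonneg_left ?_ (by positivity)
        exact mul_one_add_div_one_sub_pow_three_monotoneOn
          ⟨by positivity, pow_lt_one₀ hx0 hx1 hm⟩ ⟨(exp_pos _).le, hz1⟩
          (pow_le_exp_neg_mul_one_sub hx0 m)
    _ ≤ (1 - x) ^ 3 * (2 * exp (-t) / (1 - exp (-t)) ^ 3) := by
        gcongr (1 - x) ^ 3 * (?_ / _)
        nlinarith [exp_pos (-t)]
    _ = 2 * (exp (-t) * t ^ 3) / (1 - exp (-t)) ^ 3 / m ^ 3 := by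
        rw [hone_sub]; ring
    _ ≤ 2 * (6 * (1 - exp (-t)) ^ 3) / (1 - exp (-t)) ^ 3 / m ^ 3 := by
        gcongr 2 * ?_ / _ / _
        exact exp_neg_mul_pow_three_le ht.le
    _ = 12 / m ^ 3 := by
        field_simp
        ring

theorem tendsto_one_sub_pow_three_mul (m : ℕ) :
    Tendsto (fun x : ℝ => (1 - x) ^ 3 * (x ^ m * (1 + x ^ m) / (1 - x ^ m) ^ 3)) (𝓝[≠] 1)
      (𝓝 (2 / (m : ℝ) ^ 3)) := by
  rcases eq_or_ne m 0 with rfl | hm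
  · simp
  have hcont : ContinuousAt
      (fun x : ℝ => x ^ m * (1 + x ^ m) / (∑ i ∈ Finset.range m, x ^ i) ^ 3) 1 :=
    ContinuousAt.div (by fun_prop) (by fun_prop) (by simp [hm])
  have hlim : Tendsto (fun x : ℝ => x ^ m * (1 + x ^ m) / (∑ i ∈ Finset.range m, x ^ i) ^ 3)
      (𝓝[≠] 1) (𝓝 (2 / (m : ℝ) ^ 3)) := by
    simpa [one_add_one_eq_two] using hcont.tendsto.mono_left nhdsWithin_le_nhds
  refine hlim.congr' ?_
  filter_upwards [self_mem_nhdsWithin] with x hx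
  have : 1 - x ≠ 0 := sub_ne_zero.mpr (Ne.symm hx)
  rw [← mul_neg_geom_sum, mul_pow, mul_div_assoc', mul_div_mul_left _ _ (pow_ne_zero 3 this)]

theorem LSeries.term_mul_natCast (f : ℕ → ℂ) (s : ℂ) (n : ℕ) :
    term (fun n => f n * n) s n = term f (s - 1) n := by
  rcases eq_or_ne n 0 with rfl | hn
  · simp
  have : (n : ℂ) ≠ 0 := Nat.cast_ne_zero.mpr hn
  rw [term_of_ne_zero hn, term_of_ne_zero hn, Complex.cpow_sub _ _ this, Complex.cpow_one]
  field_simp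

theorem LSeriesHasSum.mul_natCast {f : ℕ → ℂ} {s a : ℂ} (hf : LSeriesHasSum f (s - 1) a) :
    LSeriesHasSum (fun n => f n * n) s a := by
  simpa [LSeriesHasSum, funext (term_mul_natCast f s)] using hf

theorem ArithmeticFunction.LSeriesHasSum_moebius {s : ℂ} (hs : 1 < s.re) :
    LSeriesHasSum ↗μ s (riemannZeta s)⁻¹ := by
  refine LSeriesHasSum_iff.mpr ⟨LSeriesSummable_moebius_iff.mpr hs, ?_⟩
  rw [← LSeries_zeta_eq_riemannZeta hs]
  exact eq_inv_of_mul_eq_one_right (LSeries_zeta_mul_Lseries_moebius hs)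

theorem LSeriesHasSum_prodOneSubPrimeFactors {s : ℂ} (hs : 2 < s.re) :
    LSeriesHasSum (fun n => (prodOneSubPrimeFactors n : ℂ)) s
      (riemannZeta s / riemannZeta (s - 1)) := by
  have hconv : (fun n => (prodOneSubPrimeFactors n : ℂ)) = (fun n => (μ n : ℂ) * n) ⍟ ↗ζ := by
    ext n
    simp [prodOneSubPrimeFactors_eq, convolution_def, mul_apply, pmul_apply]
  rw [hconv, div_eq_inv_mul]
  have hs' : 1 < (s - 1).re := by rw [Complex.sub_re, Complex.one_re]; linarith
  exact (LSeriesHasSum_moebius hs').mul_natCast.convolution (LSeriesHasSum_zeta (by linarith))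

theorem hasSum_prodOneSubPrimeFactors_div_pow_three :
    HasSum (fun n => (prodOneSubPrimeFactors n : ℝ) / n ^ 3) (6 * (riemannZeta 3).re / π ^ 2) := by
  have h := Complex.hasSum_re (LSeriesHasSum_prodOneSubPrimeFactors (s := 3) (by norm_num))
  have hζ2 : riemannZeta (3 - 1) = ((π ^ 2 / 6 : ℝ) : ℂ) := by
    norm_num [riemannZeta_two]
  rw [hζ2, Complex.div_ofReal_re] at h
  convert h using 1
  · ext n
    rcases eq_or_ne n 0 with rfl | hn
    · simp
    rw [term_of_ne_zero hn, show (3 : ℂ) = ((3 : ℕ) : ℂ) by norm_num, Complex.cpow_natCast]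
    norm_cast
  · field_simp

theorem abs_prodOneSubPrimeFactors_mul_le {x : ℝ} (hx0 : 0 ≤ x) (hx1 : x < 1) (m : ℕ) :
    |(prodOneSubPrimeFactors m : ℝ) * ((1 - x) ^ 3 * (x ^ m * (1 + x ^ m) / (1 - x ^ m) ^ 3))|
      ≤ 12 / (m : ℝ) ^ 2 := by
  rcases eq_or_ne m 0 with rfl | hm
  · simp [prodOneSubPrimeFactors]
  have hxm : 0 < 1 - x ^ m := sub_pos.mpr (pow_lt_one₀ hx0 hx1 hm)
  have hc : |(prodOneSubPrimeFactors m : ℝ)| ≤ m := mod_cast abs_prodOneSubPrimeFactors_le m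
  have hK : 0 ≤ (1 - x) ^ 3 * (x ^ m * (1 + x ^ m) / (1 - x ^ m) ^ 3) := by
    have := sub_nonneg.mpr hx1.le
    positivity
  rw [abs_mul, abs_of_nonneg hK]
  calc _ ≤ (m : ℝ) * (12 / (m : ℝ) ^ 3) :=
        mul_le_mul hc (one_sub_pow_three_mul_le hx0 hx1 m) (by positivity) (by positivity)
    _ = 12 / (m : ℝ) ^ 2 := by
        field_simp

/-- The expected size `μ₁(x) = x S'(x)/S(x) = ∑_{n≥1} n φ(n) xⁿ/(1-xⁿ)` of the Boltzmann
sampler for NW-convex paths satisfies `μ₁(x) ∼ 12 ζ(3)/(π² (1-x)³)` as `x → 1⁻`. -/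
theorem boltzmann_expected_size_asymptotic :
    Tendsto (fun x : ℝ =>
        (∑' n : ℕ, ((n + 1 : ℕ) : ℝ) * (Nat.totient (n + 1) : ℝ) * x ^ (n + 1) /
          (1 - x ^ (n + 1))) * (1 - x) ^ 3)
      (nhdsWithin 1 (Set.Ioo (0 : ℝ) 1)) (nhds (12 * (riemannZeta 3).re / π ^ 2)) := by
  have hlim : Tendsto (fun x : ℝ => ∑' m, (prodOneSubPrimeFactors m : ℝ) *
      ((1 - x) ^ 3 * (x ^ m * (1 + x ^ m) / (1 - x ^ m) ^ 3)))
      (𝓝[Set.Ioo 0 1] 1) (𝓝 (∑' m, (prodOneSubPrimeFactors m : ℝ) * (2 / (m : ℝ) ^ 3))) := by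
    refine tendsto_tsum_of_dominated_convergence (bound := fun m => 12 / (m : ℝ) ^ 2)
      ?_ (fun m => ?_) ?_
    · simpa [div_eq_mul_inv] using (summable_nat_pow_inv.mpr one_lt_two).mul_left (12 : ℝ)
    · exact ((tendsto_one_sub_pow_three_mul m).mono_left
        (nhdsWithin_mono _ fun x hx => hx.2.ne)).const_mul _
    · filter_upwards [self_mem_nhdsWithin] with x hx m
      exact abs_prodOneSubPrimeFactors_mul_le hx.1.le hx.2 m
  have hval : ∑' m, (prodOneSubPrimeFactors m : ℝ) * (2 / (m : ℝ) ^ 3) =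
      12 * (riemannZeta 3).re / π ^ 2 := by
    convert (hasSum_prodOneSubPrimeFactors_div_pow_three.mul_left 2).tsum_eq using 1
    · exact tsum_congr fun m => by ring
    · ring
  rw [hval] at hlim
  refine hlim.congr' ?_
  filter_upwards [self_mem_nhdsWithin] with x hx
  rw [tsum_mul_totient_lambert_eq hx.1 hx.2, ← tsum_mul_right]
  exact tsum_congr fun m => by ring
end

section
/- The Boltzmann distribution of NW-convex paths is bumpy: with μ₁(x) = ∑_{n≥1} n·φ(n)·xⁿ/(1−xⁿ) and σ(x) = ( ∑_{n≥1} n²·φ(n)·xⁿ/(1−xⁿ)² )^{1/2}, one has μ₁(x) → ∞ and σ(x)/μ₁(x) → 0 as x → 1⁻ (x real, 0 < x < 1). -/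
/-!
Write `t = 1 - x`. Since `m t xᵐ ≤ 1 - xᵐ`, we have `1 / (1 - xᵐ) ≤ 1 + 1 / (m t)`; together
with `φ(m) ≤ m` this bounds `σ²` by the moments `∑ mᵏ xᵐ ≤ k! / t^(k+1)` for `k = 1, 3`, so
`σ ≤ √14 / t²`. For `m ≤ N ≈ 1 / (2t)` Bernoulli gives `xᵐ ≥ 1/2` and `1 - xᵐ ≤ m t`, so
`μ₁ ≥ Φ(N) / (2t)` where `Φ(N) = φ(1) + ⋯ + φ(N)`. As `n ≤ 2 φ(n)²`, `Φ(N)` grows like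
`N^(3/2)`, hence `σ / μ₁ = O((N + 1) / Φ(N)) → 0`.
-/

open Real Filter

/-- The expected size `μ₁(x) = ∑_{n≥1} n φ(n) xⁿ/(1-xⁿ)` of the Boltzmann sampler for
NW-convex paths. -/
noncomputable def muNW (x : ℝ) : ℝ :=
  ∑' n : ℕ, ((n + 1 : ℕ) : ℝ) * (Nat.totient (n + 1) : ℝ) * x ^ (n + 1) / (1 - x ^ (n + 1))

/-- The standard deviation `σ(x) = (∑_{n≥1} n² φ(n) xⁿ/(1-xⁿ)²)^{1/2}` of the size of the
Boltzmann output for NW-convex paths. -/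
noncomputable def sigmaNW (x : ℝ) : ℝ :=
  Real.sqrt (∑' n : ℕ,
    ((n + 1 : ℕ) : ℝ) ^ 2 * (Nat.totient (n + 1) : ℝ) * x ^ (n + 1) / (1 - x ^ (n + 1)) ^ 2)

open scoped Topology

namespace Nat

theorem prod_primeFactors_le_two_mul_sq (n : ℕ) :
    ∏ p ∈ n.primeFactors, p ≤ 2 * (∏ p ∈ n.primeFactors, (p - 1)) ^ 2 := by
  have hodd : ∀ p ∈ n.primeFactors, p ≠ 2 → p ≤ (p - 1) ^ 2 := fun p hp h2 => by
    have h3 : 2 ≤ p - 1 := by have := (prime_of_mem_primeFactors hp).two_le; omega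
    nlinarith [Nat.sub_add_cancel (one_le_two.trans (prime_of_mem_primeFactors hp).two_le)]
  rw [← Finset.prod_pow]
  by_cases h2 : 2 ∈ n.primeFactors
  · rw [← Finset.mul_prod_erase _ _ h2, ← Finset.mul_prod_erase _ (fun p => (p - 1) ^ 2) h2]
    have := Finset.prod_le_prod' fun p hp =>
      hodd p (Finset.mem_of_mem_erase hp) (Finset.ne_of_mem_erase hp)
    simpa using Nat.mul_le_mul_left 2 this
  · exact (Finset.prod_le_prod' fun p hp => hodd p hp (ne_of_mem_of_not_mem hp h2)).trans
      (Nat.le_mul_of_pos_left _ two_pos)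

theorem le_two_mul_totient_sq (n : ℕ) : n ≤ 2 * φ n ^ 2 := by
  rcases n.eq_zero_or_pos with rfl | hn
  · simp
  have hP : 0 < ∏ p ∈ n.primeFactors, p :=
    Finset.prod_pos fun p hp => (prime_of_mem_primeFactors hp).pos
  refine Nat.le_of_mul_le_mul_right ?_ (pow_pos hP 2)
  calc n * (∏ p ∈ n.primeFactors, p) ^ 2
      = n * (∏ p ∈ n.primeFactors, p) * ∏ p ∈ n.primeFactors, p := by ring
    _ ≤ n * (2 * (∏ p ∈ n.primeFactors, (p - 1)) ^ 2) * n :=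
      Nat.mul_le_mul (Nat.mul_le_mul_left _ (prod_primeFactors_le_two_mul_sq n))
        (le_of_dvd hn (prod_primeFactors_dvd n))
    _ = 2 * (n * ∏ p ∈ n.primeFactors, (p - 1)) ^ 2 := by ring
    _ = 2 * φ n ^ 2 * (∏ p ∈ n.primeFactors, p) ^ 2 := by
      rw [← totient_mul_prod_primeFactors]; ring

end Nat

open Nat

def totientSum (N : ℕ) : ℕ := ∑ n ∈ Finset.range N, φ (n + 1)

theorem le_sqrt_mul_totient {n N : ℕ} (hn : n ≤ N) :
    (n : ℝ) ≤ √(2 * N) * φ n := by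
  have h : (n : ℝ) ≤ 2 * φ n ^ 2 := by exact_mod_cast le_two_mul_totient_sq n
  rw [← pow_le_pow_iff_left₀ (by positivity) (by positivity) two_ne_zero, mul_pow,
    sq_sqrt (by positivity)]
  have : (n : ℝ) ≤ N := by exact_mod_cast hn
  nlinarith

theorem sqrt_mul_le_totientSum (N : ℕ) : (N + 1) * √(2 * N) ≤ 4 * (totientSum N : ℝ) := by
  rcases N.eq_zero_or_pos with rfl | hN
  · simp [totientSum]
  have hgauss : (∑ n ∈ Finset.range N, ((n + 1 : ℕ) : ℝ)) * 2 = (N + 1) * N := by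
    have h : (∑ n ∈ Finset.range N, (n + 1)) * 2 = (N + 1) * N := by
      simpa [Finset.sum_range_succ'] using Finset.sum_range_id_mul_two (N + 1)
    exact_mod_cast h
  have hsum : ∑ n ∈ Finset.range N, ((n + 1 : ℕ) : ℝ) ≤ √(2 * N) * totientSum N := by
    push_cast [totientSum, Finset.mul_sum]
    exact Finset.sum_le_sum fun n hn => by
      exact_mod_cast le_sqrt_mul_totient (Finset.mem_range.mp hn)
  have hs : √(2 * N) * √(2 * N) = 2 * N := mul_self_sqrt (by positivity)
  have hN' : (0 : ℝ) < N := by exact_mod_cast hN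
  refine le_of_mul_le_mul_left ?_ hN'
  calc (N : ℝ) * ((N + 1) * √(2 * N))
      = √(2 * N) * ((∑ n ∈ Finset.range N, ((n + 1 : ℕ) : ℝ)) * 2) := by rw [hgauss]; ring
    _ ≤ √(2 * N) * ((√(2 * N) * totientSum N) * 2) := by gcongr
    _ = N * (4 * totientSum N) := by linear_combination (2 * (totientSum N : ℝ)) * hs

theorem tendsto_totientSum_div_atTop :
    Tendsto (fun N : ℕ => (totientSum N : ℝ) / (N + 1)) atTop atTop := by
  have h : Tendsto (fun N : ℕ => √(2 * N) / 4) atTop atTop :=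
    (tendsto_sqrt_atTop.comp
      (tendsto_natCast_atTop_atTop.const_mul_atTop two_pos)).atTop_div_const four_pos
  refine tendsto_atTop_mono (fun N => ?_) h
  rw [le_div_iff₀ (by positivity)]
  linarith [sqrt_mul_le_totientSum N]

section PowerBounds

variable {x : ℝ}

theorem one_sub_pow_le_mul_one_sub (hx : -1 ≤ x) (m : ℕ) : 1 - x ^ m ≤ m * (1 - x) := by
  have := one_add_mul_le_pow (a := x - 1) (by linarith) m
  rw [add_sub_cancel] at this
  linarith

theorem mul_one_sub_mul_pow_le_one_sub_pow (hx0 : 0 ≤ x) (hx1 : x ≤ 1) (m : ℕ) :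
    m * (1 - x) * x ^ m ≤ 1 - x ^ m := by
  have h : (m : ℝ) * x ^ m ≤ ∑ i ∈ Finset.range m, x ^ i := by
    simpa using Finset.card_nsmul_le_sum (Finset.range m) (x ^ ·) (x ^ m)
      fun i hi => pow_le_pow_of_le_one hx0 hx1 (Finset.mem_range.mp hi).le
  rw [← mul_neg_geom_sum]
  nlinarith

theorem succ_pow_mul_pow_succ_le (hx0 : 0 ≤ x) (hx1 : x ≤ 1) (k n : ℕ) :
    ((n + 1 : ℕ) : ℝ) ^ k * x ^ (n + 1) ≤ k ! * ((n + k).choose k * x ^ n) := by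
  have h : (n + 1) ^ k ≤ k ! * (n + k).choose k := by
    have := pow_sub_le_descFactorial (n + k) k
    rwa [Nat.add_right_comm, Nat.add_sub_cancel, descFactorial_eq_factorial_mul_choose] at this
  have h' : ((n + 1 : ℕ) : ℝ) ^ k ≤ k ! * (n + k).choose k := by exact_mod_cast h
  rw [pow_succ, ← mul_assoc]
  calc ((n + 1 : ℕ) : ℝ) ^ k * x ^ n * x ≤ ((n + 1 : ℕ) : ℝ) ^ k * x ^ n :=
        mul_le_of_le_one_right (by positivity) hx1
    _ ≤ _ := by rw [← mul_assoc]; gcongr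

variable (k : ℕ)

theorem summable_succ_pow_mul_pow_succ (hx0 : 0 ≤ x) (hx1 : x < 1) :
    Summable fun n : ℕ => ((n + 1 : ℕ) : ℝ) ^ k * x ^ (n + 1) := by
  have h := summable_choose_mul_geometric_of_norm_lt_one (R := ℝ) k (r := x)
    (by rwa [norm_of_nonneg hx0])
  exact .of_nonneg_of_le (fun n => by positivity) (succ_pow_mul_pow_succ_le hx0 hx1.le k)
    (h.mul_left (k ! : ℝ))

theorem tsum_succ_pow_mul_pow_succ_le (hx0 : 0 ≤ x) (hx1 : x < 1) :
    ∑' n : ℕ, ((n + 1 : ℕ) : ℝ) ^ k * x ^ (n + 1) ≤ k ! / (1 - x) ^ (k + 1) := by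
  have h := (hasSum_choose_mul_geometric_of_norm_lt_one k
    (by rwa [norm_of_nonneg hx0])).mul_left (k ! : ℝ)
  rw [mul_one_div] at h
  exact hasSum_le (succ_pow_mul_pow_succ_le hx0 hx1.le k)
    (summable_succ_pow_mul_pow_succ k hx0 hx1).hasSum h

end PowerBounds

section NWConvex

variable {x : ℝ}

theorem sigma_term_le (hx0 : 0 ≤ x) (hx1 : x < 1) {m : ℕ} (hm : 0 < m) :
    (m : ℝ) ^ 2 * φ m * x ^ m / (1 - x ^ m) ^ 2
      ≤ 2 * ((m : ℝ) ^ 3 * x ^ m) + 2 / (1 - x) ^ 2 * ((m : ℝ) * x ^ m) := by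
  have ht : 0 < 1 - x := by linarith
  have hs : 0 < m * (1 - x) := by positivity
  have hu : 0 < 1 - x ^ m := by linarith [pow_lt_one₀ hx0 hx1 hm.ne']
  have hsu := mul_one_sub_mul_pow_le_one_sub_pow hx0 hx1.le m
  set u := 1 - x ^ m
  set s := (m : ℝ) * (1 - x) with hs_def
  have hinv : 1 / u ≤ 1 + 1 / s := by
    have hp : x ^ m ≤ u / s := by rw [le_div_iff₀ hs]; linarith
    rw [div_le_iff₀ hu, add_mul, one_div_mul_eq_div]
    linarith
  have hinv_sq : 1 / u ^ 2 ≤ 2 + 2 / s ^ 2 := by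
    calc 1 / u ^ 2 = (1 / u) ^ 2 := (one_div_pow u 2).symm
      _ ≤ (1 + 1 / s) ^ 2 := by gcongr
      _ ≤ 2 + 2 / s ^ 2 := by
        rw [← mul_one_div 2 (s ^ 2), ← one_div_pow]
        nlinarith [sq_nonneg (1 - 1 / s)]
  have hφ : (φ m : ℝ) ≤ m := by exact_mod_cast totient_le m
  calc (m : ℝ) ^ 2 * φ m * x ^ m / u ^ 2 = (m : ℝ) ^ 2 * φ m * x ^ m * (1 / u ^ 2) := by ring
    _ ≤ (m : ℝ) ^ 2 * m * x ^ m * (2 + 2 / s ^ 2) := by gcongr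
    _ = _ := by rw [hs_def]; field_simp

theorem sigmaNW_le (hx0 : 0 ≤ x) (hx1 : x < 1) : sigmaNW x ≤ √14 / (1 - x) ^ 2 := by
  have ht : 0 < 1 - x := by linarith
  have h3 := (summable_succ_pow_mul_pow_succ 3 hx0 hx1).mul_left 2
  have h1 := (summable_succ_pow_mul_pow_succ 1 hx0 hx1).mul_left (2 / (1 - x) ^ 2)
  simp only [pow_one] at h1
  have hle := fun n : ℕ => sigma_term_le hx0 hx1 n.succ_pos
  have hsum : ∑' n : ℕ, ((n + 1 : ℕ) : ℝ) ^ 2 * φ (n + 1) * x ^ (n + 1) / (1 - x ^ (n + 1)) ^ 2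
      ≤ 14 / (1 - x) ^ 4 := by
    calc _ ≤ ∑' n : ℕ, (2 * (((n + 1 : ℕ) : ℝ) ^ 3 * x ^ (n + 1))
          + 2 / (1 - x) ^ 2 * (((n + 1 : ℕ) : ℝ) * x ^ (n + 1))) :=
          Summable.tsum_le_tsum hle
            (.of_nonneg_of_le (fun n => by positivity) hle (h3.add h1)) (h3.add h1)
      _ = 2 * ∑' n : ℕ, ((n + 1 : ℕ) : ℝ) ^ 3 * x ^ (n + 1)
          + 2 / (1 - x) ^ 2 * ∑' n : ℕ, ((n + 1 : ℕ) : ℝ) * x ^ (n + 1) := by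
          rw [h3.tsum_add h1, tsum_mul_left, tsum_mul_left]
      _ ≤ 2 * (3 ! / (1 - x) ^ 4) + 2 / (1 - x) ^ 2 * (1 ! / (1 - x) ^ 2) := by
          gcongr
          · exact tsum_succ_pow_mul_pow_succ_le 3 hx0 hx1
          · simpa using tsum_succ_pow_mul_pow_succ_le 1 hx0 hx1
      _ = 14 / (1 - x) ^ 4 := by norm_num [factorial]; field_simp; norm_num
  calc sigmaNW x ≤ √(14 / (1 - x) ^ 4) := sqrt_le_sqrt hsum
    _ = √14 / (1 - x) ^ 2 := by
      rw [sqrt_div' _ (by positivity), show 4 = 2 * 2 from rfl, pow_mul, sqrt_sq (by positivity)]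

theorem mu_term_le (hx0 : 0 ≤ x) (hx1 : x < 1) {m : ℕ} (hm : 0 < m) :
    (m : ℝ) * φ m * x ^ m / (1 - x ^ m) ≤ 1 / (1 - x) * ((m : ℝ) ^ 2 * x ^ m) := by
  have hφ : (φ m : ℝ) ≤ m := by exact_mod_cast totient_le m
  have hxm : x ^ m ≤ x := pow_le_of_le_one hx0 hx1.le hm.ne'
  calc (m : ℝ) * φ m * x ^ m / (1 - x ^ m) ≤ (m : ℝ) * m * x ^ m / (1 - x) := by
        gcongr
    _ = _ := by ring

theorem mu_term_nonneg (hx0 : 0 ≤ x) (hx1 : x ≤ 1) (m : ℕ) :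
    0 ≤ (m : ℝ) * φ m * x ^ m / (1 - x ^ m) :=
  div_nonneg (by positivity) (sub_nonneg.mpr (pow_le_one₀ hx0 hx1))

theorem summable_mu_term (hx0 : 0 ≤ x) (hx1 : x < 1) :
    Summable fun n : ℕ => ((n + 1 : ℕ) : ℝ) * φ (n + 1) * x ^ (n + 1) / (1 - x ^ (n + 1)) :=
  .of_nonneg_of_le (fun n => mu_term_nonneg hx0 hx1.le (n + 1))
    (fun n => mu_term_le hx0 hx1 n.succ_pos)
    ((summable_succ_pow_mul_pow_succ 2 hx0 hx1).mul_left _)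

theorem totient_div_le_mu_term (hx0 : 0 ≤ x) (hx1 : x < 1) {m : ℕ} (hm : 0 < m)
    (hmx : m * (1 - x) ≤ 1 / 2) :
    φ m / (2 * (1 - x)) ≤ (m : ℝ) * φ m * x ^ m / (1 - x ^ m) := by
  have hu : 0 < 1 - x ^ m := by linarith [pow_lt_one₀ hx0 hx1 hm.ne']
  have hbern := one_sub_pow_le_mul_one_sub (by linarith : -1 ≤ x) m
  calc (φ m : ℝ) / (2 * (1 - x)) = m * φ m * (1 / 2) / (m * (1 - x)) := by
        field_simp
    _ ≤ (m : ℝ) * φ m * x ^ m / (1 - x ^ m) := by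
        gcongr
        linarith

theorem totientSum_div_le_muNW (hx0 : 0 ≤ x) (hx1 : x < 1) {N : ℕ}
    (hN : N * (1 - x) ≤ 1 / 2) :
    totientSum N / (2 * (1 - x)) ≤ muNW x := by
  have hle : ∀ n ∈ Finset.range N, (φ (n + 1) : ℝ) / (2 * (1 - x))
      ≤ ((n + 1 : ℕ) : ℝ) * φ (n + 1) * x ^ (n + 1) / (1 - x ^ (n + 1)) := fun n hn => by
    refine totient_div_le_mu_term hx0 hx1 n.succ_pos (le_trans ?_ hN)
    gcongr
    exact_mod_cast Finset.mem_range.mp hn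
  push_cast [totientSum, Finset.sum_div]
  exact (Finset.sum_le_sum hle).trans <| (summable_mu_term hx0 hx1).sum_le_tsum _
    fun n _ => mu_term_nonneg hx0 hx1.le (n + 1)

theorem muNW_nonneg (hx0 : 0 ≤ x) (hx1 : x ≤ 1) : 0 ≤ muNW x :=
  tsum_nonneg fun n => mu_term_nonneg hx0 hx1 (n + 1)

noncomputable def cutoff (x : ℝ) : ℕ := ⌊1 / (2 * (1 - x))⌋₊

theorem cutoff_mul_le (hx1 : x < 1) : cutoff x * (1 - x) ≤ 1 / 2 := by
  have h := Nat.floor_le (one_div_nonneg.mpr (by linarith : 0 ≤ 2 * (1 - x)))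
  rw [le_div_iff₀ (by linarith)] at h
  unfold cutoff
  linarith

theorem one_le_two_mul_cutoff_add_one (hx1 : x < 1) : 1 ≤ 2 * (cutoff x + 1) * (1 - x) := by
  have h := Nat.lt_floor_add_one (1 / (2 * (1 - x)))
  rw [div_lt_iff₀ (by linarith)] at h
  unfold cutoff
  linarith

theorem tendsto_cutoff : Tendsto cutoff (𝓝[<] 1) atTop := by
  have h : Tendsto (fun x : ℝ => 2 * (1 - x)) (𝓝[<] 1) (𝓝[>] 0) := by
    refine tendsto_nhdsWithin_of_tendsto_nhds_of_eventually_within _ ?_ ?_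
    · exact tendsto_nhdsWithin_of_tendsto_nhds <| by
        simpa using
          ((continuous_const.sub continuous_id).const_mul 2).tendsto' (1 : ℝ) 0 (by simp)
    · filter_upwards [self_mem_nhdsWithin] with x (hx : x < 1)
      simpa using hx
  exact tendsto_nat_floor_atTop.comp ((tendsto_inv_nhdsGT_zero.comp h).congr fun x => by simp)

theorem sigmaNW_div_muNW_le (hx0 : 0 ≤ x) (hx1 : x < 1)
    (hΦ : 0 < (totientSum (cutoff x) : ℝ)) :
    sigmaNW x / muNW x ≤ 4 * √14 * ((totientSum (cutoff x) : ℝ) / (cutoff x + 1))⁻¹ := by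
  have ht : 0 < 1 - x := by linarith
  have hN := one_le_two_mul_cutoff_add_one hx1
  calc sigmaNW x / muNW x ≤ (√14 / (1 - x) ^ 2) / (totientSum (cutoff x) / (2 * (1 - x))) :=
        div_le_div₀ (by positivity) (sigmaNW_le hx0 hx1) (by positivity)
          (totientSum_div_le_muNW hx0 hx1 (cutoff_mul_le hx1))
    _ = 2 * √14 / ((1 - x) * totientSum (cutoff x)) := by field_simp
    _ ≤ 2 * √14 * (2 * (cutoff x + 1) * (1 - x)) / ((1 - x) * totientSum (cutoff x)) := by
        gcongr ?_ / _
        exact le_mul_of_one_le_right (by positivity) hN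
    _ = 4 * √14 * ((totientSum (cutoff x) : ℝ) / (cutoff x + 1))⁻¹ := by field_simp; norm_num

end NWConvex

/-- The Boltzmann distribution of NW-convex paths is bumpy: `μ₁(x) → ∞` and
`σ(x)/μ₁(x) → 0` as `x → 1⁻`. -/
theorem boltzmann_bumpy :
    Tendsto muNW (nhdsWithin 1 (Set.Ioo (0 : ℝ) 1)) atTop ∧
    Tendsto (fun x => sigmaNW x / muNW x) (nhdsWithin 1 (Set.Ioo (0 : ℝ) 1)) (nhds 0) := by
  have hratio : Tendsto (fun x => (totientSum (cutoff x) : ℝ) / (cutoff x + 1))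
      (𝓝[Set.Ioo 0 1] 1) atTop :=
    tendsto_totientSum_div_atTop.comp
      (tendsto_cutoff.mono_left (nhdsWithin_mono _ Set.Ioo_subset_Iio_self))
  have hx : ∀ᶠ x in 𝓝[Set.Ioo 0 1] (1 : ℝ), x ∈ Set.Ioo 0 1 := self_mem_nhdsWithin
  constructor
  · refine tendsto_atTop_mono' _ ?_ (hratio.atTop_div_const two_pos)
    filter_upwards [hx] with x ⟨hx0, hx1⟩
    calc (totientSum (cutoff x) : ℝ) / (cutoff x + 1) / 2
        = totientSum (cutoff x) / (2 * (cutoff x + 1)) := by rw [div_div, mul_comm _ (2 : ℝ)]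
      _ ≤ totientSum (cutoff x) / (2 * (1 - x)) := by
        gcongr
        linarith
      _ ≤ muNW x := totientSum_div_le_muNW hx0.le hx1 (cutoff_mul_le hx1)
  · have hlim := hratio.inv_tendsto_atTop.const_mul (4 * √14)
    rw [mul_zero] at hlim
    refine squeeze_zero' ?_ ?_ hlim
    · filter_upwards [hx] with x ⟨hx0, hx1⟩
      exact div_nonneg (sqrt_nonneg _) (muNW_nonneg hx0.le hx1.le)
    · filter_upwards [hx, hratio.eventually_gt_atTop 0] with x ⟨hx0, hx1⟩ hpos
      exact sigmaNW_div_muNW_le hx0.le hx1 ((div_pos_iff_of_pos_right (by positivity)).mp hpos)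
end

section
/- For every real t > 0 and every real u, |S(e^{−t+2πiu})| ≤ S(e^{−t}) · exp( −(ln 5 / 2) · ∑_{k≥1} φ(k) · e^{−kt} · sin²(π u k) ), where S(z) = ∏_{k=1}^∞ (1 − zᵏ)^{−φ(k)} is extended to complex z with |z| < 1. -/
/-!
Taking logarithms, `log ‖S(z)‖ = -∑ φ(k) log ‖1 - zᵏ‖`, so it suffices to compare the factors
one at a time. Writing `zᵏ = r e^{2iθ}` with `0 ≤ r < 1`,
`‖1 - r e^{2iθ}‖² = (1 - r)² + 4 r sin² θ ≥ (1 - r)² (1 + 4 r sin² θ) ≥ (1 - r)² 5^{r sin² θ}`,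
the last step being `1 + y ≥ 5^{y/4}` on `[0, 4]`, i.e. concavity of `log` on `[1, 5]`.
Hence `log ‖1 - zᵏ‖ ≥ log (1 - ‖z‖ᵏ) + (ln 5 / 2) ‖z‖ᵏ sin² θ`, and summing with weights `φ(k)`
gives the bound.
-/

open Real Complex

/-- The generating function of NW-convex paths `S(z) = ∏_{k≥1} (1 - zᵏ)^{-φ(k)}`,
for complex `z` with `|z| < 1`. -/
noncomputable def SNWc (z : ℂ) : ℂ :=
  ∏' k : ℕ, ((1 - z ^ (k + 1)) ^ Nat.totient (k + 1))⁻¹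

/-- The generating function of NW-convex paths `S(x) = ∏_{k≥1} (1 - xᵏ)^{-φ(k)}`,
for real `0 ≤ x < 1`. -/
noncomputable def SNWr (x : ℝ) : ℝ :=
  ∏' k : ℕ, ((1 - x ^ (k + 1)) ^ Nat.totient (k + 1))⁻¹

lemma exp_log_five_div_four_mul_le_one_add {y : ℝ} (h0 : 0 ≤ y) (h4 : y ≤ 4) :
    rexp (Real.log 5 / 4 * y) ≤ 1 + y := by
  have hchord := strictConcaveOn_log_Ioi.concaveOn.2 (Set.mem_Ioi.mpr one_pos)
    (Set.mem_Ioi.mpr (by norm_num : (0 : ℝ) < 5))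
    (by linarith : 0 ≤ 1 - y / 4) (by linarith : 0 ≤ y / 4) (by ring)
  simp only [smul_eq_mul, Real.log_one, mul_zero, zero_add, mul_one] at hchord
  calc rexp (Real.log 5 / 4 * y) = rexp (y / 4 * Real.log 5) := by ring_nf
    _ ≤ rexp (Real.log (1 - y / 4 + y / 4 * 5)) := exp_le_exp.mpr hchord
    _ = 1 + y := by rw [Real.exp_log (by linarith)]; ring

lemma log_one_sub_add_le_half_log {r s : ℝ} (hr0 : 0 ≤ r) (hr1 : r < 1) (hs0 : 0 ≤ s)
    (hs1 : s ≤ 1) :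
    Real.log (1 - r) + Real.log 5 / 2 * (r * s) ≤ Real.log ((1 - r) ^ 2 + 4 * (r * s)) / 2 := by
  have hrs : 0 ≤ r * s := mul_nonneg hr0 hs0
  have hexp := exp_log_five_div_four_mul_le_one_add (y := 4 * (r * s)) (by positivity)
    (by nlinarith)
  have hpos : 0 < (1 - r) ^ 2 * rexp (Real.log 5 / 4 * (4 * (r * s))) := by
    have : 0 < 1 - r := by linarith
    positivity
  calc Real.log (1 - r) + Real.log 5 / 2 * (r * s)
      = Real.log ((1 - r) ^ 2 * rexp (Real.log 5 / 4 * (4 * (r * s)))) / 2 := by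
        rw [Real.log_mul (by nlinarith) (exp_ne_zero _), Real.log_pow, Real.log_exp]
        push_cast
        ring
    _ ≤ Real.log ((1 - r) ^ 2 + 4 * (r * s)) / 2 := by
        gcongr
        calc (1 - r) ^ 2 * rexp (Real.log 5 / 4 * (4 * (r * s)))
            ≤ (1 - r) ^ 2 * (1 + 4 * (r * s)) := by gcongr
          _ ≤ (1 - r) ^ 2 + 4 * (r * s) := by
            have : (1 - r) ^ 2 ≤ 1 := by nlinarith
            nlinarith

lemma norm_one_sub_mul_exp_sq (r θ : ℝ) :
    ‖1 - r * cexp (2 * θ * I)‖ ^ 2 = (1 - r) ^ 2 + 4 * (r * Real.sin θ ^ 2) := by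
  have hI : (2 * θ * I : ℂ) = ((2 * θ : ℝ) : ℂ) * I := by push_cast; ring
  rw [hI, Complex.sq_norm, Complex.normSq_apply]
  simp only [sub_re, sub_im, one_re, one_im, re_ofReal_mul, im_ofReal_mul, exp_ofReal_mul_I_re,
    exp_ofReal_mul_I_im]
  linear_combination r ^ 2 * Real.sin_sq_add_cos_sq (2 * θ) - 2 * r * Real.cos_two_mul_eq_one_sub θ

lemma log_one_sub_add_le_log_norm_one_sub_mul_exp {r : ℝ} (hr0 : 0 ≤ r) (hr1 : r < 1) (θ : ℝ) :
    Real.log (1 - r) + Real.log 5 / 2 * (r * Real.sin θ ^ 2) ≤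
      Real.log ‖1 - r * cexp (2 * θ * I)‖ := by
  have hlog : Real.log ‖1 - r * cexp (2 * θ * I)‖ =
      Real.log (‖1 - r * cexp (2 * θ * I)‖ ^ 2) / 2 := by
    rw [Real.log_pow]; ring
  rw [hlog, norm_one_sub_mul_exp_sq]
  exact log_one_sub_add_le_half_log hr0 hr1 (sq_nonneg _) (Real.sin_sq_le_one θ)

section EulerProduct

variable {a : ℕ → ℕ} {z : ℂ}

lemma summable_mul_log_one_sub_pow (ha : ∀ n, a n ≤ n) (hz : ‖z‖ < 1) :
    Summable fun k : ℕ => (a (k + 1) : ℂ) * log (1 - z ^ (k + 1)) := by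
  have hgeom : Summable fun k : ℕ => 3 / 2 * (((k + 1 : ℕ) : ℝ) * ‖z‖ ^ (k + 1)) := by
    have hr : ‖‖z‖‖ < 1 := by rwa [norm_norm]
    have h := (summable_nat_add_iff 1).mpr (summable_pow_mul_geometric_of_norm_lt_one (R := ℝ) 1 hr)
    simpa only [pow_one] using h.mul_left (3 / 2)
  have hsmall : ∀ᶠ k : ℕ in Filter.cofinite, ‖z‖ ^ (k + 1) ≤ 1 / 2 := by
    rw [Nat.cofinite_eq_atTop]
    exact (Filter.tendsto_add_atTop_nat 1).eventually
      ((tendsto_pow_atTop_nhds_zero_of_lt_one (norm_nonneg z) hz).eventually_le_const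
        one_half_pos)
  refine hgeom.of_norm_bounded_eventually (hsmall.mono fun k hk => ?_)
  have hlog := norm_log_one_add_half_le_self (z := -z ^ (k + 1)) (by rwa [norm_neg, norm_pow])
  rw [← sub_eq_add_neg, norm_neg, norm_pow] at hlog
  rw [norm_mul, Complex.norm_natCast]
  calc (a (k + 1) : ℝ) * ‖log (1 - z ^ (k + 1))‖
      ≤ ((k + 1 : ℕ) : ℝ) * (3 / 2 * ‖z‖ ^ (k + 1)) := by
        gcongr
        exact ha _
    _ = 3 / 2 * (((k + 1 : ℕ) : ℝ) * ‖z‖ ^ (k + 1)) := by ring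

lemma one_sub_pow_ne_zero (hz : ‖z‖ < 1) (n : ℕ) : 1 - z ^ (n + 1) ≠ 0 := by
  have hlt : ‖z ^ (n + 1)‖ < 1 := by
    rw [norm_pow]; exact pow_lt_one₀ (norm_nonneg z) hz n.succ_ne_zero
  exact sub_ne_zero.mpr fun h => by simp [← h] at hlt

lemma hasProd_inv_one_sub_pow_pow (ha : ∀ n, a n ≤ n) (hz : ‖z‖ < 1) :
    HasProd (fun k : ℕ => ((1 - z ^ (k + 1)) ^ a (k + 1))⁻¹)
      (cexp (-∑' k : ℕ, (a (k + 1) : ℂ) * log (1 - z ^ (k + 1)))) := by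
  refine (summable_mul_log_one_sub_pow ha hz).hasSum.neg.cexp.congr_fun fun k => ?_
  simp only [Function.comp_apply, Complex.exp_neg, Complex.exp_nat_mul,
    Complex.exp_log (one_sub_pow_ne_zero hz k)]

lemma summable_mul_log_norm_one_sub_pow (ha : ∀ n, a n ≤ n) (hz : ‖z‖ < 1) :
    Summable fun k : ℕ => (a (k + 1) : ℝ) * Real.log ‖1 - z ^ (k + 1)‖ := by
  simpa [log_re] using (Complex.hasSum_re (summable_mul_log_one_sub_pow ha hz).hasSum).summable

lemma norm_tprod_inv_one_sub_pow_pow (ha : ∀ n, a n ≤ n) (hz : ‖z‖ < 1) :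
    ‖∏' k : ℕ, ((1 - z ^ (k + 1)) ^ a (k + 1))⁻¹‖ =
      rexp (-∑' k : ℕ, (a (k + 1) : ℝ) * Real.log ‖1 - z ^ (k + 1)‖) := by
  rw [(hasProd_inv_one_sub_pow_pow ha hz).tprod_eq, Complex.norm_exp, neg_re,
    re_tsum (summable_mul_log_one_sub_pow ha hz)]
  simp [log_re]

end EulerProduct

lemma norm_one_sub_ofReal_pow {x : ℝ} (hx0 : 0 ≤ x) (hx1 : x ≤ 1) (n : ℕ) :
    ‖1 - (x : ℂ) ^ n‖ = 1 - x ^ n := by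
  rw [← ofReal_pow, ← ofReal_one, ← ofReal_sub, norm_real, Real.norm_of_nonneg]
  linarith [pow_le_one₀ hx0 hx1 (n := n)]

lemma SNWr_eq_norm_SNWc {x : ℝ} (hx0 : 0 ≤ x) (hx1 : x < 1) : SNWr x = ‖SNWc x‖ := by
  have hx : ‖(x : ℂ)‖ < 1 := by rwa [norm_real, Real.norm_of_nonneg hx0]
  rw [SNWc, (hasProd_inv_one_sub_pow_pow Nat.totient_le hx).multipliable.norm_tprod, SNWr]
  simp only [norm_inv, norm_pow, norm_one_sub_ofReal_pow hx0 hx1.le]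

lemma exp_neg_add_two_pi_mul_I_pow (t u : ℝ) (n : ℕ) :
    cexp (-(t : ℂ) + 2 * π * I * u) ^ n = (rexp (-t) ^ n : ℝ) * cexp (2 * (π * u * n : ℝ) * I) := by
  rw [ofReal_pow, ofReal_exp, ← Complex.exp_nat_mul, ← Complex.exp_nat_mul, ← Complex.exp_add]
  push_cast
  ring_nf

lemma log_one_sub_exp_pow_add_le_log_norm {t : ℝ} (ht : 0 < t) (u : ℝ) {n : ℕ} (hn : n ≠ 0) :
    Real.log (1 - rexp (-t) ^ n) + Real.log 5 / 2 * (rexp (-(n : ℝ) * t) * Real.sin (π * u * n) ^ 2)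
      ≤ Real.log ‖1 - cexp (-(t : ℂ) + 2 * π * I * u) ^ n‖ := by
  have hx1 : rexp (-t) < 1 := Real.exp_lt_one_iff.mpr (by linarith)
  rw [exp_neg_add_two_pi_mul_I_pow, neg_mul, ← mul_neg, Real.exp_nat_mul]
  exact log_one_sub_add_le_log_norm_one_sub_mul_exp (pow_nonneg (exp_pos _).le n)
    (pow_lt_one₀ (exp_pos _).le hx1 hn) _

lemma tsum_add_mul_tsum_le {ι : Type*} {f g h : ι → ℝ} {c : ℝ} (hf : Summable f)
    (hg : Summable g) (hc : 0 < c) (h0 : ∀ i, 0 ≤ h i) (hle : ∀ i, f i + c * h i ≤ g i) :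
    ∑' i, f i + c * ∑' i, h i ≤ ∑' i, g i := by
  have hh : Summable h := ((hg.sub hf).div_const c).of_nonneg_of_le h0 fun i => by
    rw [le_div_iff₀ hc]; linarith [hle i]
  rw [← tsum_mul_left, ← hf.tsum_add (hh.mul_left c)]
  exact (hf.add (hh.mul_left c)).tsum_le_tsum hle hg

/-- The modulus bound on the circle of radius `e^{-t}`:
`|S(e^{-t+2πiu})| ≤ S(e^{-t}) exp(-(ln 5/2) ∑_{k≥1} φ(k) e^{-kt} sin²(π u k))`. -/
theorem S_modulus_bound (t : ℝ) (ht : 0 < t) (u : ℝ) :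
    ‖SNWc (Complex.exp (-(t : ℂ) + 2 * Real.pi * Complex.I * u))‖ ≤
      SNWr (Real.exp (-t)) *
        Real.exp (-(Real.log 5 / 2) *
          ∑' k : ℕ, (Nat.totient (k + 1) : ℝ) * Real.exp (-((k + 1 : ℕ) : ℝ) * t) *
            Real.sin (Real.pi * u * ((k + 1 : ℕ) : ℝ)) ^ 2) := by
  set x := rexp (-t)
  have hx0 : 0 ≤ x := (exp_pos _).le
  have hx1 : x < 1 := Real.exp_lt_one_iff.mpr (by linarith)
  have hxC : ‖(x : ℂ)‖ < 1 := by rwa [norm_real, Real.norm_of_nonneg hx0]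
  have hz : ‖cexp (-(t : ℂ) + 2 * π * I * u)‖ < 1 := by simpa [Complex.norm_exp] using ht
  have hfactor (k : ℕ) :
      (Nat.totient (k + 1) : ℝ) * Real.log ‖1 - (x : ℂ) ^ (k + 1)‖ +
          Real.log 5 / 2 * ((Nat.totient (k + 1) : ℝ) * rexp (-((k + 1 : ℕ) : ℝ) * t) *
            Real.sin (π * u * ((k + 1 : ℕ) : ℝ)) ^ 2) ≤
        (Nat.totient (k + 1) : ℝ) * Real.log ‖1 - cexp (-(t : ℂ) + 2 * π * I * u) ^ (k + 1)‖ := by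
    have key := log_one_sub_exp_pow_add_le_log_norm ht u k.succ_ne_zero
    rw [norm_one_sub_ofReal_pow hx0 hx1.le]
    linarith [mul_le_mul_of_nonneg_left key (Nat.cast_nonneg (Nat.totient (k + 1)) : (0 : ℝ) ≤ _)]
  have hsum := tsum_add_mul_tsum_le (summable_mul_log_norm_one_sub_pow Nat.totient_le hxC)
    (summable_mul_log_norm_one_sub_pow Nat.totient_le hz) (by positivity)
    (fun k => by positivity) hfactor
  rw [SNWr_eq_norm_SNWc hx0 hx1, SNWc, SNWc, norm_tprod_inv_one_sub_pow_pow Nat.totient_le hz,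
    norm_tprod_inv_one_sub_pow_pow Nat.totient_le hxC, ← Real.exp_add, exp_le_exp]
  linarith
end
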